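/- arXiv:1311.1955 — 4 statements merged into one kernel-verified Lean document; each statement's English description precedes it below -/
import Mathlib

section
/- For every n ≥ 3, the number of triangulations of a convex n-gon (i.e., the number of sets of n−3 pairwise noncrossing diagonals of the n-gon) equals the number of 312-avoiding permutations of {1,2,…,n−2}. -/
/-- A permutation of `{1,…,m}` (as `Equiv.Perm (Fin m)`) is 312-avoiding if there are
no positions `i < j < k` with `π(j) < π(k) < π(i)`. -/
def Avoids312 {m : ℕ} (π : Equiv.Perm (Fin m)) : Prop :=
  ¬ ∃ i j k : Fin m, i < j ∧ j < k ∧ π j < π k ∧ π k < π i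

/-- `p = (a, b)` is a diagonal of the convex `n`-gon with vertices `1,…,n` in cyclic
order: `1 ≤ a < b ≤ n`, `a` and `b` are not adjacent in cyclic order. -/
def IsDiagonal (n : ℕ) (p : ℕ × ℕ) : Prop :=
  1 ≤ p.1 ∧ p.1 + 2 ≤ p.2 ∧ p.2 ≤ n ∧ ¬(p.1 = 1 ∧ p.2 = n)

/-- Two diagonals `{a,b}` and `{c,d}` (with `a < b`, `c < d`) cross if
`a < c < b < d` or `c < a < d < b`. -/
def Crosses (p q : ℕ × ℕ) : Prop :=
  (p.1 < q.1 ∧ q.1 < p.2 ∧ p.2 < q.2) ∨ (q.1 < p.1 ∧ p.1 < q.2 ∧ q.2 < p.2)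

/-- A triangulation of the convex `n`-gon is a set of `n - 3` pairwise noncrossing
diagonals. -/
def IsTriangulation (n : ℕ) (T : Finset (ℕ × ℕ)) : Prop :=
  T.card = n - 3 ∧ (∀ p ∈ T, IsDiagonal n p) ∧
    ∀ p ∈ T, ∀ q ∈ T, p ≠ q → ¬ Crosses p q

/-- Triangulation of the polygon with vertices a, a+1, ..., b. -/
def IsTriangOn (a b : ℕ) (T : Finset (ℕ × ℕ)) : Prop :=
  T.card = b - a - 2 ∧
    (∀ p ∈ T, a ≤ p.1 ∧ p.1 + 2 ≤ p.2 ∧ p.2 ≤ b ∧ ¬(p.1 = a ∧ p.2 = b)) ∧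
    ∀ p ∈ T, ∀ q ∈ T, p ≠ q → ¬ Crosses p q

/-- Upper bound: pairwise noncrossing diagonals of the [a,b]-polygon number at most b-a-2. -/
lemma card_noncross_le : ∀ (N a b : ℕ) (T : Finset (ℕ × ℕ)), T.card = N →
    (∀ p ∈ T, a ≤ p.1 ∧ p.1 + 2 ≤ p.2 ∧ p.2 ≤ b ∧ ¬(p.1 = a ∧ p.2 = b)) →
    (∀ p ∈ T, ∀ q ∈ T, p ≠ q → ¬ Crosses p q) → T.card ≤ b - a - 2 := by
  intro N
  induction N using Nat.strong_induction_on with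
  | _ N ih =>
    intro a b T hcard hd hnc
    rcases T.eq_empty_or_nonempty with rfl | hne
    · simp
    -- pick a diagonal of minimal width
    obtain ⟨cd, hcdT, hmin⟩ := T.exists_min_image (fun p => p.2 - p.1) hne
    obtain ⟨c, d⟩ := cd
    simp only at hmin
    have hcd := hd _ hcdT
    -- every other diagonal has endpoints outside the open interval (c,d)
    have hout : ∀ p ∈ T, p ≠ (c, d) → (p.1 ≤ c ∨ d ≤ p.1) ∧ (p.2 ≤ c ∨ d ≤ p.2) := by
      intro p hp hne'
      have h1 := hnc _ hp _ hcdT hne'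
      have h2 := hnc _ hcdT _ hp (Ne.symm hne')
      have hw := hmin p hp
      have hdp := hd _ hp
      simp only [Crosses, not_or, not_and, not_lt] at h1 h2
      obtain ⟨h1a, h1b⟩ := h1
      obtain ⟨h2a, h2b⟩ := h2
      have hne2 : p.1 ≠ c ∨ p.2 ≠ d := by
        by_contra h
        push_neg at h
        exact hne' (Prod.ext h.1 h.2)
      constructor <;> omega
    set e : ℕ := d - c - 1 with he
    have he1 : 1 ≤ e := by omega
    -- the contraction map
    set φ : ℕ → ℕ := fun v => if v ≤ c then v else v - e with hφ
    have hφlt : ∀ x y : ℕ, (x ≤ c ∨ d ≤ x) → (y ≤ c ∨ d ≤ y) → (φ x < φ y ↔ x < y) := by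
      intro x y hx hy
      simp only [hφ]
      split_ifs <;> omega
    have hφinj : ∀ x y : ℕ, (x ≤ c ∨ d ≤ x) → (y ≤ c ∨ d ≤ y) → φ x = φ y → x = y := by
      intro x y hx hy
      simp only [hφ]
      split_ifs <;> omega
    set T' : Finset (ℕ × ℕ) := (T.erase (c, d)).image (fun p => (φ p.1, φ p.2)) with hT'
    have hmem : ∀ p ∈ T.erase (c, d), p ∈ T ∧ p ≠ (c, d) := by
      intro p hp
      exact ⟨Finset.mem_of_mem_erase hp, Finset.ne_of_mem_erase hp⟩
    have hcard' : T'.card = T.card - 1 := by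
      rw [hT', Finset.card_image_of_injOn, Finset.card_erase_of_mem hcdT]
      intro p hp q hq hpq
      obtain ⟨hpT, hpne⟩ := hmem _ hp
      obtain ⟨hqT, hqne⟩ := hmem _ hq
      obtain ⟨hp1, hp2⟩ := hout _ hpT hpne
      obtain ⟨hq1, hq2⟩ := hout _ hqT hqne
      have e1 : φ p.1 = φ q.1 := congrArg Prod.fst hpq
      have e2 : φ p.2 = φ q.2 := congrArg Prod.snd hpq
      exact Prod.ext (hφinj _ _ hp1 hq1 e1) (hφinj _ _ hp2 hq2 e2)
    have hd' : ∀ p ∈ T', a ≤ p.1 ∧ p.1 + 2 ≤ p.2 ∧ p.2 ≤ b - e ∧ ¬(p.1 = a ∧ p.2 = b - e) := by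
      intro p' hp'
      obtain ⟨p, hp, rfl⟩ := Finset.mem_image.mp hp'
      obtain ⟨hpT, hpne⟩ := hmem _ hp
      obtain ⟨hp1, hp2⟩ := hout _ hpT hpne
      have hdp := hd _ hpT
      have hne2 : p.1 ≠ c ∨ p.2 ≠ d := by
        by_contra h
        push_neg at h
        exact hpne (Prod.ext h.1 h.2)
      simp only [hφ]
      split_ifs <;> omega
    have hnc' : ∀ p ∈ T', ∀ q ∈ T', p ≠ q → ¬ Crosses p q := by
      intro p' hp' q' hq' hne' hcr
      obtain ⟨p, hp, rfl⟩ := Finset.mem_image.mp hp'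
      obtain ⟨q, hq, rfl⟩ := Finset.mem_image.mp hq'
      obtain ⟨hpT, hpne⟩ := hmem _ hp
      obtain ⟨hqT, hqne⟩ := hmem _ hq
      obtain ⟨hp1, hp2⟩ := hout _ hpT hpne
      obtain ⟨hq1, hq2⟩ := hout _ hqT hqne
      have hpq : p ≠ q := by rintro rfl; exact hne' rfl
      apply hnc _ hpT _ hqT hpq
      rcases hcr with ⟨u1, u2, u3⟩ | ⟨u1, u2, u3⟩
      · exact Or.inl ⟨(hφlt _ _ hp1 hq1).mp u1, (hφlt _ _ hq1 hp2).mp u2, (hφlt _ _ hp2 hq2).mp u3⟩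
      · exact Or.inr ⟨(hφlt _ _ hq1 hp1).mp u1, (hφlt _ _ hp1 hq2).mp u2, (hφlt _ _ hq2 hp2).mp u3⟩
    have hNpos : 1 ≤ N := by
      rw [← hcard]
      exact Finset.card_pos.mpr hne
    have hle := ih (N - 1) (by omega) a (b - e) T' (by omega) hd' hnc'
    simp only at hcd
    omega
def shiftD (c : ℕ) (T : Finset (ℕ × ℕ)) : Finset (ℕ × ℕ) :=
  T.image fun p => (p.1 - c, p.2 - c)

def shiftU (c : ℕ) (T : Finset (ℕ × ℕ)) : Finset (ℕ × ℕ) :=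
  T.image fun p => (p.1 + c, p.2 + c)

lemma shiftU_shiftD {c : ℕ} {T : Finset (ℕ × ℕ)} (h : ∀ p ∈ T, c ≤ p.1 ∧ c ≤ p.2) :
    shiftU c (shiftD c T) = T := by
  rw [shiftD, shiftU, Finset.image_image]
  have : T.image ((fun p : ℕ × ℕ => (p.1 + c, p.2 + c)) ∘ fun p => (p.1 - c, p.2 - c)) =
      T.image id := by
    apply Finset.image_congr
    intro p hp
    obtain ⟨h1, h2⟩ := h p hp
    simp only [Function.comp_apply, id_eq]
    exact Prod.ext (by simp; omega) (by simp; omega)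
  rw [this, Finset.image_id]

lemma shiftD_shiftU {c : ℕ} {T : Finset (ℕ × ℕ)} : shiftD c (shiftU c T) = T := by
  rw [shiftU, shiftD, Finset.image_image]
  have : ((fun p : ℕ × ℕ => (p.1 - c, p.2 - c)) ∘ fun p : ℕ × ℕ => (p.1 + c, p.2 + c)) = id := by
    funext p; simp
  rw [this, Finset.image_id]

lemma isTriangOn_shiftD {a b c : ℕ} {T : Finset (ℕ × ℕ)} (hc : c < a)
    (h : IsTriangOn a b T) : IsTriangOn (a - c) (b - c) (shiftD c T) := by
  obtain ⟨hcard, hd, hnc⟩ := h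
  refine ⟨?_, ?_, ?_⟩
  · rw [shiftD, Finset.card_image_of_injOn, hcard]
    · omega
    · intro p hp q hq hpq
      have h1 := hd p hp; have h2 := hd q hq
      have e1 : p.1 - c = q.1 - c := congrArg Prod.fst hpq
      have e2 : p.2 - c = q.2 - c := congrArg Prod.snd hpq
      exact Prod.ext (by omega) (by omega)
  · intro p' hp'
    obtain ⟨p, hp, rfl⟩ := Finset.mem_image.mp hp'
    have h1 := hd p hp
    constructor
    · simp; omega
    refine ⟨by simp; omega, by simp; omega, ?_⟩
    simp only
    omega
  · intro p' hp' q' hq' hne hcr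
    obtain ⟨p, hp, rfl⟩ := Finset.mem_image.mp hp'
    obtain ⟨q, hq, rfl⟩ := Finset.mem_image.mp hq'
    have h1 := hd p hp; have h2 := hd q hq
    have hpq : p ≠ q := by rintro rfl; exact hne rfl
    apply hnc p hp q hq hpq
    simp only [Crosses] at hcr ⊢
    omega

lemma isTriangOn_shiftU {a b c : ℕ} {T : Finset (ℕ × ℕ)}
    (h : IsTriangOn a b T) : IsTriangOn (a + c) (b + c) (shiftU c T) := by
  obtain ⟨hcard, hd, hnc⟩ := h
  refine ⟨?_, ?_, ?_⟩
  · rw [shiftU, Finset.card_image_of_injOn, hcard]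
    · omega
    · intro p hp q hq hpq
      have e1 : p.1 + c = q.1 + c := congrArg Prod.fst hpq
      have e2 : p.2 + c = q.2 + c := congrArg Prod.snd hpq
      exact Prod.ext (by omega) (by omega)
  · intro p' hp'
    obtain ⟨p, hp, rfl⟩ := Finset.mem_image.mp hp'
    have h1 := hd p hp
    refine ⟨by simp; omega, by simp; omega, by simp; omega, ?_⟩
    simp only
    omega
  · intro p' hp' q' hq' hne hcr
    obtain ⟨p, hp, rfl⟩ := Finset.mem_image.mp hp'
    obtain ⟨q, hq, rfl⟩ := Finset.mem_image.mp hq'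
    have hpq : p ≠ q := by rintro rfl; exact hne rfl
    apply hnc p hp q hq hpq
    simp only [Crosses] at hcr ⊢
    omega

lemma tri_setFinite (a b : ℕ) : {T : Finset (ℕ × ℕ) | IsTriangOn a b T}.Finite := by
  apply Set.Finite.subset (Finset.finite_toSet ((Finset.Icc (a, a) (b, b)).powerset))
  intro T hT
  simp only [Set.mem_setOf_eq] at hT
  simp only [Finset.coe_powerset, Set.mem_preimage, Set.mem_powerset_iff, Finset.coe_subset,
    Finset.mem_coe, Finset.mem_powerset]
  intro p hp
  have h1 := hT.2.1 p hp
  rw [Finset.mem_Icc]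
  exact ⟨⟨by omega, by omega⟩, ⟨by omega, by omega⟩⟩

instance tri_finite (a b : ℕ) : Finite {T : Finset (ℕ × ℕ) // IsTriangOn a b T} :=
  (tri_setFinite a b).to_subtype

noncomputable def triShiftEquiv (k n : ℕ) (hk : 1 ≤ k) (hkn : k ≤ n) :
    {T : Finset (ℕ × ℕ) // IsTriangOn k n T} ≃
      {T : Finset (ℕ × ℕ) // IsTriangOn 1 (n - k + 1) T} where
  toFun T := ⟨shiftD (k - 1) T.1, by
    have h := isTriangOn_shiftD (a := k) (b := n) (c := k - 1) (by omega) T.2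
    rwa [show k - (k - 1) = 1 by omega, show n - (k - 1) = n - k + 1 by omega] at h⟩
  invFun T := ⟨shiftU (k - 1) T.1, by
    have h := isTriangOn_shiftU (a := 1) (b := n - k + 1) (c := k - 1) T.2
    rwa [show 1 + (k - 1) = k by omega, show n - k + 1 + (k - 1) = n by omega] at h⟩
  left_inv T := by
    apply Subtype.ext
    exact shiftU_shiftD (fun p hp => by have := T.2.2.1 p hp; exact ⟨by omega, by omega⟩)
  right_inv T := by
    apply Subtype.ext
    exact shiftD_shiftU

lemma card_triang_shift (k n : ℕ) (hk : 1 ≤ k) (hkn : k ≤ n) :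
    Nat.card {T : Finset (ℕ × ℕ) // IsTriangOn k n T} =
      Nat.card {T : Finset (ℕ × ℕ) // IsTriangOn 1 (n - k + 1) T} :=
  Nat.card_congr (triShiftEquiv k n hk hkn)
def glue (n k : ℕ) (A B : Finset (ℕ × ℕ)) : Finset (ℕ × ℕ) :=
  ((A ∪ B) ∪ (if 3 ≤ k then {(1, k)} else ∅)) ∪ (if k + 2 ≤ n then {(k, n)} else ∅)

lemma mem_glue {n k : ℕ} {A B : Finset (ℕ × ℕ)} {p : ℕ × ℕ} :
    p ∈ glue n k A B ↔
      p ∈ A ∨ p ∈ B ∨ (3 ≤ k ∧ p = (1, k)) ∨ (k + 2 ≤ n ∧ p = (k, n)) := by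
  simp only [glue, Finset.mem_union]
  split_ifs with h1 h2 h3 <;> simp <;> tauto

def kOf (T : Finset (ℕ × ℕ)) : ℕ :=
  max ((T.filter fun p => p.1 = 1).sup Prod.snd) 2

/-- Gluing produces a triangulation. -/
lemma glue_isTriang {n k : ℕ} {A B : Finset (ℕ × ℕ)} (hn : 4 ≤ n) (hk2 : 2 ≤ k)
    (hk1 : k ≤ n - 1) (hA : IsTriangOn 1 k A) (hB : IsTriangOn k n B) :
    IsTriangOn 1 n (glue n k A B) := by
  obtain ⟨hAc, hAd, hAnc⟩ := hA
  obtain ⟨hBc, hBd, hBnc⟩ := hB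
  have hdiag : ∀ p ∈ glue n k A B,
      1 ≤ p.1 ∧ p.1 + 2 ≤ p.2 ∧ p.2 ≤ n ∧ ¬(p.1 = 1 ∧ p.2 = n) := by
    intro p hp
    rcases mem_glue.mp hp with h | h | ⟨h3, rfl⟩ | ⟨h3, rfl⟩
    · have := hAd p h; omega
    · have := hBd p h; omega
    · simp only; omega
    · simp only; omega
  refine ⟨?_, hdiag, ?_⟩
  · -- cardinality
    have dAB : Disjoint A B := by
      rw [Finset.disjoint_left]
      intro p hpA hpB
      have := hAd p hpA; have := hBd p hpB; omega
    have hA1 : (1, k) ∉ A := by intro h; exact (hAd _ h).2.2.2 ⟨rfl, rfl⟩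
    have hB1 : (1, k) ∉ B := by intro h; have : k ≤ 1 := (hBd _ h).1; omega
    have hA2 : (k, n) ∉ A := by intro h; have : n ≤ k := (hAd _ h).2.2.1; omega
    have hB2 : (k, n) ∉ B := by intro h; exact (hBd _ h).2.2.2 ⟨rfl, rfl⟩
    have d1 : Disjoint (A ∪ B) (if 3 ≤ k then ({(1, k)} : Finset (ℕ × ℕ)) else ∅) := by
      split_ifs with h
      · rw [Finset.disjoint_singleton_right]
        simp only [Finset.mem_union]
        push_neg
        exact ⟨hA1, hB1⟩
      · exact Finset.disjoint_empty_right _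
    have d2 : Disjoint ((A ∪ B) ∪ (if 3 ≤ k then ({(1, k)} : Finset (ℕ × ℕ)) else ∅))
        (if k + 2 ≤ n then ({(k, n)} : Finset (ℕ × ℕ)) else ∅) := by
      split_ifs with h3 h4 h4
      · rw [Finset.disjoint_singleton_right]
        simp only [Finset.mem_union, Finset.mem_singleton, Prod.mk.injEq]
        push_neg
        exact ⟨⟨hA2, hB2⟩, fun h => by omega⟩
      · exact Finset.disjoint_empty_right _
      · rw [Finset.disjoint_singleton_right]
        simp only [Finset.mem_union, Finset.notMem_empty, or_false]
        push_neg
        exact ⟨hA2, hB2⟩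
      · exact Finset.disjoint_empty_right _
    rw [glue, Finset.card_union_of_disjoint d2, Finset.card_union_of_disjoint d1,
      Finset.card_union_of_disjoint dAB, hAc, hBc]
    have e1 : (if 3 ≤ k then ({(1, k)} : Finset (ℕ × ℕ)) else ∅).card
        = if 3 ≤ k then 1 else 0 := by split_ifs <;> simp
    have e2 : (if k + 2 ≤ n then ({(k, n)} : Finset (ℕ × ℕ)) else ∅).card
        = if k + 2 ≤ n then 1 else 0 := by split_ifs <;> simp
    rw [e1, e2]
    split_ifs <;> omega
  · -- noncrossing
    intro p hp q hq hne hcr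
    rcases mem_glue.mp hp with h | h | ⟨h3, rfl⟩ | ⟨h3, rfl⟩ <;>
      rcases mem_glue.mp hq with h' | h' | ⟨h3', rfl⟩ | ⟨h3', rfl⟩
    · exact hAnc p h q h' hne hcr
    · have := hAd p h; have := hBd q h'; simp only [Crosses] at hcr; omega
    · have := hAd p h; simp only [Crosses] at hcr; omega
    · have := hAd p h; simp only [Crosses] at hcr; omega
    · have := hBd p h; have := hAd q h'; simp only [Crosses] at hcr; omega
    · exact hBnc p h q h' hne hcr
    · have := hBd p h; simp only [Crosses] at hcr; omega
    · have := hBd p h; simp only [Crosses] at hcr; omega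
    · have := hAd q h'; simp only [Crosses] at hcr; omega
    · have := hBd q h'; simp only [Crosses] at hcr; omega
    · exact hne rfl
    · simp only [Crosses] at hcr; omega
    · have := hAd q h'; simp only [Crosses] at hcr; omega
    · have := hBd q h'; simp only [Crosses] at hcr; omega
    · simp only [Crosses] at hcr; omega
    · exact hne rfl

/-- k is recovered from the glued triangulation. -/
lemma kOf_glue {n k : ℕ} {A B : Finset (ℕ × ℕ)} (hn : 4 ≤ n) (hk2 : 2 ≤ k)
    (hk1 : k ≤ n - 1) (hA : IsTriangOn 1 k A) (hB : IsTriangOn k n B) :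
    kOf (glue n k A B) = k := by
  obtain ⟨hAc, hAd, hAnc⟩ := hA
  obtain ⟨hBc, hBd, hBnc⟩ := hB
  have hsup : ((glue n k A B).filter fun p => p.1 = 1).sup Prod.snd ≤ k := by
    apply Finset.sup_le
    intro p hp
    obtain ⟨hp, hp1⟩ := Finset.mem_filter.mp hp
    rcases mem_glue.mp hp with h | h | ⟨h3, rfl⟩ | ⟨h3, rfl⟩
    · exact (hAd p h).2.2.1
    · have := hBd p h; omega
    · simp
    · have : k = 1 := hp1; omega
  have hge : 3 ≤ k → k ≤ ((glue n k A B).filter fun p => p.1 = 1).sup Prod.snd := by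
    intro h3
    have hmem : (1, k) ∈ (glue n k A B).filter fun p => p.1 = 1 := by
      rw [Finset.mem_filter]
      exact ⟨mem_glue.mpr (Or.inr (Or.inr (Or.inl ⟨h3, rfl⟩))), rfl⟩
    exact Finset.le_sup (f := Prod.snd) hmem
  rw [kOf]
  rcases Nat.lt_or_ge k 3 with h | h
  · have : k = 2 := by omega
    subst this
    omega
  · have := hge h; omega

/-- A is recovered from the glued triangulation. -/
lemma A_glue {n k : ℕ} {A B : Finset (ℕ × ℕ)} (hn : 4 ≤ n) (hk2 : 2 ≤ k)
    (hk1 : k ≤ n - 1) (hA : IsTriangOn 1 k A) (hB : IsTriangOn k n B) :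
    (glue n k A B).filter (fun p => p.2 ≤ k ∧ p ≠ (1, k)) = A := by
  obtain ⟨hAc, hAd, hAnc⟩ := hA
  obtain ⟨hBc, hBd, hBnc⟩ := hB
  ext p
  rw [Finset.mem_filter, mem_glue]
  constructor
  · rintro ⟨h | h | ⟨h3, rfl⟩ | ⟨h3, rfl⟩, h1, h2⟩
    · exact h
    · have := hBd p h; omega
    · exact absurd rfl h2
    · omega
  · intro h
    have := hAd p h
    refine ⟨Or.inl h, by omega, ?_⟩
    rintro rfl
    exact this.2.2.2 ⟨rfl, rfl⟩

/-- B is recovered from the glued triangulation. -/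
lemma B_glue {n k : ℕ} {A B : Finset (ℕ × ℕ)} (hn : 4 ≤ n) (hk2 : 2 ≤ k)
    (hk1 : k ≤ n - 1) (hA : IsTriangOn 1 k A) (hB : IsTriangOn k n B) :
    (glue n k A B).filter (fun p => k ≤ p.1 ∧ p ≠ (k, n)) = B := by
  obtain ⟨hAc, hAd, hAnc⟩ := hA
  obtain ⟨hBc, hBd, hBnc⟩ := hB
  ext p
  rw [Finset.mem_filter, mem_glue]
  constructor
  · rintro ⟨h | h | ⟨h3, rfl⟩ | ⟨h3, rfl⟩, h1, h2⟩
    · have := hAd p h; omega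
    · exact h
    · simp only at h1; omega
    · exact absurd rfl h2
  · intro h
    have := hBd p h
    refine ⟨Or.inr (Or.inl h), by omega, ?_⟩
    rintro rfl
    exact this.2.2.2 ⟨rfl, rfl⟩

/-- Every triangulation of the n-gon decomposes uniquely via the triangle on edge (1,n). -/
lemma triang_decomp {n : ℕ} (hn : 4 ≤ n) (T : Finset (ℕ × ℕ)) (hT : IsTriangOn 1 n T) :
    ∃ k A B, 2 ≤ k ∧ k ≤ n - 1 ∧ IsTriangOn 1 k A ∧ IsTriangOn k n B ∧
      T = glue n k A B := by
  obtain ⟨hcard, hd, hnc⟩ := hT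
  set k := kOf T with hkdef
  have hk2 : 2 ≤ k := by rw [hkdef, kOf]; exact le_max_right _ _
  clear_value k
  -- every diagonal from vertex 1 reaches at most k
  have hsup : ∀ p ∈ T, p.1 = 1 → p.2 ≤ k := by
    intro p hp h1
    have : p ∈ T.filter fun p => p.1 = 1 := Finset.mem_filter.mpr ⟨hp, h1⟩
    calc p.2 ≤ (T.filter fun p => p.1 = 1).sup Prod.snd := Finset.le_sup (f := Prod.snd) this
    _ ≤ k := by rw [hkdef, kOf]; exact le_max_left _ _
  -- if k ≥ 3 then (1,k) ∈ T
  have hmem1 : 3 ≤ k → (1, k) ∈ T := by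
    intro h3
    have hne : (T.filter fun p => p.1 = 1).Nonempty := by
      rcases Finset.eq_empty_or_nonempty (T.filter fun p => p.1 = 1) with he | hne
      · rw [hkdef, kOf, he] at h3
        simp at h3
      · exact hne
    obtain ⟨p, hp, hsup'⟩ := Finset.exists_mem_eq_sup _ hne Prod.snd
    obtain ⟨hpT, hp1⟩ := Finset.mem_filter.mp hp
    have hpk : p.2 = k := by
      have h1 : p.2 ≤ k := hsup p hpT hp1
      have h2 : k = max p.2 2 := by rw [hkdef, kOf, ← hsup']
      omega
    have : p = (1, k) := Prod.ext hp1 hpk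
    rwa [this] at hpT
  have hk1 : k ≤ n - 1 := by
    rcases Nat.lt_or_ge k 3 with h | h
    · omega
    · have := hd _ (hmem1 h)
      simp at this
      omega
  -- every diagonal other than (1,k) is on one side
  have hsplit : ∀ p ∈ T, p ≠ (1, k) → p.2 ≤ k ∨ k ≤ p.1 := by
    intro p hp hne
    have hdp := hd p hp
    rcases Nat.lt_or_ge k 3 with h | h
    · -- k = 2 : no diagonal from vertex 1 at all
      have hk2' : k = 2 := by omega
      rcases Nat.eq_or_lt_of_le hdp.1 with h1 | h1
      · have := hsup p hp h1.symm; omega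
      · omega
    · have h1k := hmem1 h
      have hpne : p ≠ (1, k) := hne
      have hc1 := hnc p hp _ h1k hpne
      simp only [Crosses, not_or, not_and, not_lt] at hc1
      obtain ⟨u1, u2⟩ := hc1
      rcases Nat.eq_or_lt_of_le hdp.1 with h1 | h1
      · exact Or.inl (hsup p hp h1.symm)
      · omega
  set A := T.filter (fun p => p.2 ≤ k ∧ p ≠ (1, k)) with hA
  set B := T.filter (fun p => k ≤ p.1 ∧ p ≠ (k, n)) with hB
  set c1 : Finset (ℕ × ℕ) := if (1, k) ∈ T then {(1, k)} else ∅ with hc1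
  set c2 : Finset (ℕ × ℕ) := if (k, n) ∈ T then {(k, n)} else ∅ with hc2
  have hAd : ∀ p ∈ A, 1 ≤ p.1 ∧ p.1 + 2 ≤ p.2 ∧ p.2 ≤ k ∧ ¬(p.1 = 1 ∧ p.2 = k) := by
    intro p hp
    obtain ⟨hpT, h1, h2⟩ := Finset.mem_filter.mp hp
    have := hd p hpT
    refine ⟨by omega, by omega, h1, ?_⟩
    intro ⟨e1, e2⟩
    exact h2 (Prod.ext e1 e2)
  have hBd : ∀ p ∈ B, k ≤ p.1 ∧ p.1 + 2 ≤ p.2 ∧ p.2 ≤ n ∧ ¬(p.1 = k ∧ p.2 = n) := by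
    intro p hp
    obtain ⟨hpT, h1, h2⟩ := Finset.mem_filter.mp hp
    have := hd p hpT
    refine ⟨h1, by omega, by omega, ?_⟩
    intro ⟨e1, e2⟩
    exact h2 (Prod.ext e1 e2)
  have hAnc : ∀ p ∈ A, ∀ q ∈ A, p ≠ q → ¬ Crosses p q := fun p hp q hq =>
    hnc p (Finset.mem_filter.mp hp).1 q (Finset.mem_filter.mp hq).1
  have hBnc : ∀ p ∈ B, ∀ q ∈ B, p ≠ q → ¬ Crosses p q := fun p hp q hq =>
    hnc p (Finset.mem_filter.mp hp).1 q (Finset.mem_filter.mp hq).1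
  have hAcle : A.card ≤ k - 1 - 2 := card_noncross_le A.card 1 k A rfl hAd hAnc
  have hBcle : B.card ≤ n - k - 2 := card_noncross_le B.card k n B rfl hBd hBnc
  -- T is the disjoint union of A, B, c1, c2
  have hT_eq : T = ((A ∪ B) ∪ c1) ∪ c2 := by
    ext p
    simp only [Finset.mem_union, hA, hB, hc1, hc2, Finset.mem_filter]
    constructor
    · intro hp
      by_cases he1 : p = (1, k)
      · subst he1
        left; right
        rw [if_pos hp]
        exact Finset.mem_singleton_self _
      · by_cases he2 : p = (k, n)
        · subst he2
          right
          rw [if_pos hp]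
          exact Finset.mem_singleton_self _
        · rcases hsplit p hp he1 with h | h
          · exact Or.inl (Or.inl (Or.inl ⟨hp, h, he1⟩))
          · exact Or.inl (Or.inl (Or.inr ⟨hp, h, he2⟩))
    · intro hp
      rcases hp with ((⟨h, _⟩ | ⟨h, _⟩) | h) | h
      · exact h
      · exact h
      · split_ifs at h with hm
        · rwa [Finset.mem_singleton.mp h]
        · simp at h
      · split_ifs at h with hm
        · rwa [Finset.mem_singleton.mp h]
        · simp at h
  have hd1k : (1, k) ∈ T → 3 ≤ k := by
    intro h
    have := hd _ h
    simp at this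
    omega
  have hdkn : (k, n) ∈ T → k + 2 ≤ n := by
    intro h
    have := hd _ h
    simp at this
    omega
  have hA1 : (1, k) ∉ A := by
    intro h
    exact ((Finset.mem_filter.mp h).2.2) rfl
  have hB1 : (1, k) ∉ B := by
    intro h
    have : k ≤ 1 := (Finset.mem_filter.mp h).2.1
    omega
  have hA2 : (k, n) ∉ A := by
    intro h
    have : n ≤ k := (Finset.mem_filter.mp h).2.1
    omega
  have hB2 : (k, n) ∉ B := by
    intro h
    exact ((Finset.mem_filter.mp h).2.2) rfl
  have hne12 : ((1, k) : ℕ × ℕ) ≠ (k, n) := by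
    intro h
    have h1 : 1 = k := congrArg Prod.fst h
    omega
  have dAB : Disjoint A B := by
    rw [Finset.disjoint_left]
    intro p hpA hpB
    have := hAd p hpA
    have := hBd p hpB
    omega
  have d1 : Disjoint (A ∪ B) c1 := by
    rw [hc1]
    split_ifs with h
    · rw [Finset.disjoint_singleton_right]
      simp only [Finset.mem_union]
      push_neg
      exact ⟨hA1, hB1⟩
    · exact Finset.disjoint_empty_right _
  have d2 : Disjoint ((A ∪ B) ∪ c1) c2 := by
    rw [hc2]
    split_ifs with h
    · rw [Finset.disjoint_singleton_right]
      simp only [Finset.mem_union]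
      push_neg
      refine ⟨⟨hA2, hB2⟩, ?_⟩
      rw [hc1]
      split_ifs with h'
      · rw [Finset.mem_singleton]
        exact fun hh => hne12 hh.symm
      · exact Finset.notMem_empty _
    · exact Finset.disjoint_empty_right _
  have hc1card : c1.card = if (1, k) ∈ T then 1 else 0 := by
    rw [hc1]; split_ifs <;> simp
  have hc2card : c2.card = if (k, n) ∈ T then 1 else 0 := by
    rw [hc2]; split_ifs <;> simp
  have hcardsum : T.card = A.card + B.card + c1.card + c2.card := by
    rw [hT_eq, Finset.card_union_of_disjoint d2, Finset.card_union_of_disjoint d1,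
      Finset.card_union_of_disjoint dAB]
  -- counting forces everything
  have hi1 : (if (1, k) ∈ T then 1 else 0) = if 3 ≤ k then 1 else 0 := by
    split_ifs with u1 u2 u2
    · rfl
    · exact absurd (hd1k u1) u2
    · exact absurd (hmem1 u2) u1
    · rfl
  -- main counting
  rw [hc1card, hc2card, hi1] at hcardsum
  have w1 : (3 ≤ k ∧ (if 3 ≤ k then (1:ℕ) else 0) = 1) ∨
      (k ≤ 2 ∧ (if 3 ≤ k then (1:ℕ) else 0) = 0) := by
    by_cases u : 3 ≤ k
    · exact Or.inl ⟨u, if_pos u⟩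
    · exact Or.inr ⟨by omega, if_neg u⟩
  have w2mem : ((k, n) ∈ T ∧ (if (k, n) ∈ T then (1:ℕ) else 0) = 1) ∨
      ((k, n) ∉ T ∧ (if (k, n) ∈ T then (1:ℕ) else 0) = 0) := by
    by_cases v : (k, n) ∈ T
    · exact Or.inl ⟨v, if_pos v⟩
    · exact Or.inr ⟨v, if_neg v⟩
  have w2 : ((if (k, n) ∈ T then (1:ℕ) else 0) = 1 ∧ k + 2 ≤ n) ∨
      (if (k, n) ∈ T then (1:ℕ) else 0) = 0 := by
    rcases w2mem with ⟨hm, h1⟩ | ⟨hm, h0⟩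
    · exact Or.inl ⟨h1, hdkn hm⟩
    · exact Or.inr h0
  have hAcard : A.card = k - 1 - 2 := by omega
  have hBcard : B.card = n - k - 2 := by omega
  have hiffmp : k + 2 ≤ n → (k, n) ∈ T := by
    intro hkn
    rcases w2mem with ⟨hm, _⟩ | ⟨hm, h0⟩
    · exact hm
    · exfalso; omega
  refine ⟨k, A, B, hk2, hk1, ⟨hAcard, hAd, hAnc⟩, ⟨hBcard, hBd, hBnc⟩, ?_⟩
  rw [hT_eq, glue]
  congr 1
  · congr 1
    rw [hc1]
    split_ifs with u1 u2 u2
    · rfl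
    · exact absurd (hd1k u1) u2
    · exact absurd (hmem1 u2) u1
    · rfl
  · rw [hc2]
    split_ifs with u1 u2 u2
    · rfl
    · exact absurd (hdkn u1) u2
    · exact absurd (hiffmp u2) u1
    · rfl

noncomputable def t (m : ℕ) : ℕ := Nat.card {T : Finset (ℕ × ℕ) // IsTriangOn 1 m T}

lemma t_small (m : ℕ) (hm : m ≤ 3) : t m = 1 := by
  rw [t, Nat.card_eq_one_iff_unique]
  have h0 : IsTriangOn 1 m (∅ : Finset (ℕ × ℕ)) := by
    refine ⟨by simp; omega, by simp, by simp⟩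
  constructor
  · constructor
    intro ⟨T, hT⟩ ⟨S, hS⟩
    have h1 : T = ∅ := Finset.card_eq_zero.mp (by rw [hT.1]; omega)
    have h2 : S = ∅ := Finset.card_eq_zero.mp (by rw [hS.1]; omega)
    subst h1; subst h2; rfl
  · exact ⟨⟨∅, h0⟩⟩

lemma t_rec (n : ℕ) (hn : 4 ≤ n) :
    t n = ∑ i ∈ Finset.range (n - 2), t (i + 2) * t (n - i - 1) := by
  classical
  haveI : ∀ i : Fin (n - 2), Fintype {A : Finset (ℕ × ℕ) // IsTriangOn 1 (i.1 + 2) A} := by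
    intro i; exact Fintype.ofFinite _
  haveI : ∀ i : Fin (n - 2), Fintype {B : Finset (ℕ × ℕ) // IsTriangOn (i.1 + 2) n B} := by
    intro i; exact Fintype.ofFinite _
  haveI : Fintype {T : Finset (ℕ × ℕ) // IsTriangOn 1 n T} := Fintype.ofFinite _
  set F : (Σ i : Fin (n - 2), {A : Finset (ℕ × ℕ) // IsTriangOn 1 (i.1 + 2) A} ×
      {B : Finset (ℕ × ℕ) // IsTriangOn (i.1 + 2) n B}) →
      {T : Finset (ℕ × ℕ) // IsTriangOn 1 n T} :=
    fun x => ⟨glue n (x.1.1 + 2) x.2.1.1 x.2.2.1,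
      glue_isTriang hn (by omega) (by have := x.1.isLt; omega) x.2.1.2 x.2.2.2⟩ with hF
  have hbij : Function.Bijective F := by
    constructor
    · rintro ⟨i, A, B⟩ ⟨j, A', B'⟩ h
      have hg : glue n (i.1 + 2) A.1 B.1 = glue n (j.1 + 2) A'.1 B'.1 :=
        congrArg Subtype.val h
      have hi2 : i.1 + 2 ≤ n - 1 := by have := i.isLt; omega
      have hj2 : j.1 + 2 ≤ n - 1 := by have := j.isLt; omega
      have hk : i.1 + 2 = j.1 + 2 := by
        rw [← kOf_glue hn (by omega) hi2 A.2 B.2, hg, kOf_glue hn (by omega) hj2 A'.2 B'.2]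
      have hij : i = j := Fin.ext (by omega)
      subst hij
      have hA : A.1 = A'.1 := by
        rw [← A_glue hn (by omega) hi2 A.2 B.2, hg, A_glue hn (by omega) hi2 A'.2 B'.2]
      have hB : B.1 = B'.1 := by
        rw [← B_glue hn (by omega) hi2 A.2 B.2, hg, B_glue hn (by omega) hi2 A'.2 B'.2]
      exact congrArg (Sigma.mk i) (Prod.ext (Subtype.ext hA) (Subtype.ext hB))
    · rintro ⟨T, hT⟩
      obtain ⟨k, A, B, hk2, hk1, hA, hB, rfl⟩ := triang_decomp hn T hT
      have e : k - 2 + 2 = k := by omega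
      refine ⟨⟨⟨k - 2, by omega⟩, ⟨⟨A, by rw [e]; exact hA⟩, ⟨B, by rw [e]; exact hB⟩⟩⟩, ?_⟩
      apply Subtype.ext
      show glue n (k - 2 + 2) A B = glue n k A B
      rw [e]
  calc t n = Nat.card (Σ i : Fin (n - 2), {A : Finset (ℕ × ℕ) // IsTriangOn 1 (i.1 + 2) A} ×
      {B : Finset (ℕ × ℕ) // IsTriangOn (i.1 + 2) n B}) :=
        (Nat.card_eq_of_bijective F hbij).symm
    _ = ∑ i : Fin (n - 2), t (i.1 + 2) * t (n - i.1 - 1) := by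
        rw [Nat.card_eq_fintype_card, Fintype.card_sigma]
        apply Finset.sum_congr rfl
        intro i _
        rw [Fintype.card_prod, ← Nat.card_eq_fintype_card, ← Nat.card_eq_fintype_card]
        have h1 : Nat.card {B : Finset (ℕ × ℕ) // IsTriangOn (i.1 + 2) n B}
            = t (n - i.1 - 1) := by
          have h := card_triang_shift (i.1 + 2) n (by omega) (by have := i.isLt; omega)
          rw [show n - (i.1 + 2) + 1 = n - i.1 - 1 by have := i.isLt; omega] at h
          exact h
        rw [h1]
        rfl
    _ = ∑ i ∈ Finset.range (n - 2), t (i + 2) * t (n - i - 1) :=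
        Fin.sum_univ_eq_sum_range (fun i => t (i + 2) * t (n - i - 1)) (n - 2)

lemma t_cat : ∀ m : ℕ, 2 ≤ m → t m = catalan (m - 2) := by
  intro m
  induction m using Nat.strong_induction_on with
  | _ m ih =>
    intro hm
    rcases Nat.lt_or_ge m 4 with h | h
    · interval_cases m
      · rw [t_small 2 (by omega)]; rw [show (2:ℕ) - 2 = 0 from rfl, catalan_zero]
      · rw [t_small 3 (by omega)]; rw [show (3:ℕ) - 2 = 1 from rfl, catalan_one]
    · rw [t_rec m h]
      have hsum : ∀ i ∈ Finset.range (m - 2), t (i + 2) * t (m - i - 1)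
          = catalan i * catalan (m - 3 - i) := by
        intro i hi
        rw [Finset.mem_range] at hi
        rw [ih (i + 2) (by omega) (by omega), ih (m - i - 1) (by omega) (by omega)]
        congr 2 <;> omega
      rw [Finset.sum_congr rfl hsum, show m - 2 = m - 3 + 1 by omega, catalan_succ]
      exact (Fin.sum_univ_eq_sum_range (fun i => catalan i * catalan (m - 3 - i))
        (m - 3 + 1)).symm

def insFun (m j : ℕ) (hj : j ≤ m) (σ : Equiv.Perm (Fin j)) (τ : Equiv.Perm (Fin (m - j)))
    (i : Fin (m + 1)) : Fin (m + 1) :=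
  if h : i.val < j then ⟨(σ ⟨i.val, h⟩).val + 1, by have := (σ ⟨i.val, h⟩).isLt; omega⟩
  else if h2 : i.val = j then ⟨0, by omega⟩
  else ⟨(τ ⟨i.val - j - 1, by have := i.isLt; omega⟩).val + j + 1, by
    have := (τ ⟨i.val - j - 1, by have := i.isLt; omega⟩).isLt; omega⟩

lemma insFun_lt_val {m j : ℕ} (hj : j ≤ m) (σ : Equiv.Perm (Fin j))
    (τ : Equiv.Perm (Fin (m - j))) (i : Fin (m + 1)) (h : i.val < j) :
    (insFun m j hj σ τ i).val = (σ ⟨i.val, h⟩).val + 1 := by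
  rw [insFun, dif_pos h]

lemma insFun_eq_val {m j : ℕ} (hj : j ≤ m) (σ : Equiv.Perm (Fin j))
    (τ : Equiv.Perm (Fin (m - j))) (i : Fin (m + 1)) (h : i.val = j) :
    (insFun m j hj σ τ i).val = 0 := by
  rw [insFun, dif_neg (by omega), dif_pos h]

lemma insFun_gt_val {m j : ℕ} (hj : j ≤ m) (σ : Equiv.Perm (Fin j))
    (τ : Equiv.Perm (Fin (m - j))) (i : Fin (m + 1)) (h : j < i.val)
    (hlt : i.val - j - 1 < m - j) :
    (insFun m j hj σ τ i).val = (τ ⟨i.val - j - 1, hlt⟩).val + j + 1 := by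
  rw [insFun, dif_neg (by omega), dif_neg (by omega)]

lemma insFun_injective {m j : ℕ} (hj : j ≤ m) (σ : Equiv.Perm (Fin j))
    (τ : Equiv.Perm (Fin (m - j))) : Function.Injective (insFun m j hj σ τ) := by
  intro x y hxy
  have hv : (insFun m j hj σ τ x).val = (insFun m j hj σ τ y).val := congrArg Fin.val hxy
  apply Fin.ext
  rcases Nat.lt_trichotomy x.val j with hx | hx | hx <;>
    rcases Nat.lt_trichotomy y.val j with hy | hy | hy
  · rw [insFun_lt_val hj σ τ x hx, insFun_lt_val hj σ τ y hy] at hv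
    have h5 : σ ⟨x.val, hx⟩ = σ ⟨y.val, hy⟩ := Fin.ext (by omega)
    simpa using congrArg Fin.val (σ.injective h5)
  · rw [insFun_lt_val hj σ τ x hx, insFun_eq_val hj σ τ y hy] at hv; omega
  · have h1 : y.val - j - 1 < m - j := by have := y.isLt; omega
    rw [insFun_lt_val hj σ τ x hx, insFun_gt_val hj σ τ y hy h1] at hv
    have := (σ ⟨x.val, hx⟩).isLt
    omega
  · rw [insFun_eq_val hj σ τ x hx, insFun_lt_val hj σ τ y hy] at hv; omega
  · omega
  · have h1 : y.val - j - 1 < m - j := by have := y.isLt; omega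
    rw [insFun_eq_val hj σ τ x hx, insFun_gt_val hj σ τ y hy h1] at hv; omega
  · have h1 : x.val - j - 1 < m - j := by have := x.isLt; omega
    rw [insFun_gt_val hj σ τ x hx h1, insFun_lt_val hj σ τ y hy] at hv
    have := (σ ⟨y.val, hy⟩).isLt
    omega
  · have h1 : x.val - j - 1 < m - j := by have := x.isLt; omega
    rw [insFun_gt_val hj σ τ x hx h1, insFun_eq_val hj σ τ y hy] at hv; omega
  · have h1 : x.val - j - 1 < m - j := by have := x.isLt; omega
    have h2 : y.val - j - 1 < m - j := by have := y.isLt; omega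
    rw [insFun_gt_val hj σ τ x hx h1, insFun_gt_val hj σ τ y hy h2] at hv
    have : τ ⟨x.val - j - 1, h1⟩ = τ ⟨y.val - j - 1, h2⟩ := Fin.ext (by omega)
    have := τ.injective this
    have := congrArg Fin.val this
    simp only at this
    omega

noncomputable def insPerm (m j : ℕ) (hj : j ≤ m) (σ : Equiv.Perm (Fin j))
    (τ : Equiv.Perm (Fin (m - j))) : Equiv.Perm (Fin (m + 1)) :=
  Equiv.ofBijective _ (Finite.injective_iff_bijective.mp (insFun_injective hj σ τ))

lemma insPerm_apply {m j : ℕ} (hj : j ≤ m) (σ : Equiv.Perm (Fin j))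
    (τ : Equiv.Perm (Fin (m - j))) (i : Fin (m + 1)) :
    insPerm m j hj σ τ i = insFun m j hj σ τ i := rfl

lemma avoids_insPerm {m j : ℕ} (hj : j ≤ m) (σ : Equiv.Perm (Fin j))
    (τ : Equiv.Perm (Fin (m - j))) :
    Avoids312 (insPerm m j hj σ τ) ↔ Avoids312 σ ∧ Avoids312 τ := by
  constructor
  · intro hav
    constructor
    · intro ⟨a, b, c, h1, h2, h3, h4⟩
      apply hav
      have ha := a.isLt; have hb := b.isLt; have hc := c.isLt
      refine ⟨⟨a.val, by omega⟩, ⟨b.val, by omega⟩, ⟨c.val, by omega⟩, ?_, ?_, ?_, ?_⟩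
      · exact Fin.lt_def.mpr (Fin.lt_def.mp h1)
      · exact Fin.lt_def.mpr (Fin.lt_def.mp h2)
      · rw [Fin.lt_def, insPerm_apply, insPerm_apply, insFun_lt_val hj σ τ _ hb,
          insFun_lt_val hj σ τ _ hc]
        simp only [Fin.eta]
        have := Fin.lt_def.mp h3
        omega
      · rw [Fin.lt_def, insPerm_apply, insPerm_apply, insFun_lt_val hj σ τ _ hc,
          insFun_lt_val hj σ τ _ ha]
        simp only [Fin.eta]
        have := Fin.lt_def.mp h4
        omega
    · intro ⟨a, b, c, h1, h2, h3, h4⟩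
      apply hav
      have ha := a.isLt; have hb := b.isLt; have hc := c.isLt
      refine ⟨⟨a.val + j + 1, by omega⟩, ⟨b.val + j + 1, by omega⟩, ⟨c.val + j + 1, by omega⟩,
        ?_, ?_, ?_, ?_⟩
      · exact Fin.lt_def.mpr (by simp [Fin.lt_def.mp h1])
      · exact Fin.lt_def.mpr (by simp [Fin.lt_def.mp h2])
      · rw [Fin.lt_def, insPerm_apply, insPerm_apply,
          insFun_gt_val hj σ τ _ (by simp) (by simp; omega),
          insFun_gt_val hj σ τ _ (by simp) (by simp; omega)]
        have e1 : (⟨(⟨b.val + j + 1, by omega⟩ : Fin (m+1)).val - j - 1, by simp; omega⟩ : Fin (m - j)) = b :=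
          Fin.ext (by simp; omega)
        have e2 : (⟨(⟨c.val + j + 1, by omega⟩ : Fin (m+1)).val - j - 1, by simp; omega⟩ : Fin (m - j)) = c :=
          Fin.ext (by simp; omega)
        rw [e1, e2]
        have := Fin.lt_def.mp h3
        omega
      · rw [Fin.lt_def, insPerm_apply, insPerm_apply,
          insFun_gt_val hj σ τ _ (by simp) (by simp; omega),
          insFun_gt_val hj σ τ _ (by simp) (by simp; omega)]
        have e1 : (⟨(⟨c.val + j + 1, by omega⟩ : Fin (m+1)).val - j - 1, by simp; omega⟩ : Fin (m - j)) = c :=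
          Fin.ext (by simp; omega)
        have e2 : (⟨(⟨a.val + j + 1, by omega⟩ : Fin (m+1)).val - j - 1, by simp; omega⟩ : Fin (m - j)) = a :=
          Fin.ext (by simp; omega)
        rw [e1, e2]
        have := Fin.lt_def.mp h4
        omega
  · intro ⟨hσ, hτ⟩ ⟨a, b, c, h1, h2, h3, h4⟩
    have ha := a.isLt; have hb := b.isLt; have hc := c.isLt
    have l1 := Fin.lt_def.mp h1
    have l2 := Fin.lt_def.mp h2
    have l3 := Fin.lt_def.mp h3
    have l4 := Fin.lt_def.mp h4
    rw [insPerm_apply, insPerm_apply] at l3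
    rw [insPerm_apply, insPerm_apply] at l4
    rcases Nat.lt_trichotomy c.val j with hcj | hcj | hcj
    · -- all three below j
      have hbj : b.val < j := by omega
      have haj : a.val < j := by omega
      rw [insFun_lt_val hj σ τ _ hbj, insFun_lt_val hj σ τ _ hcj] at l3
      rw [insFun_lt_val hj σ τ _ hcj, insFun_lt_val hj σ τ _ haj] at l4
      exact hσ ⟨⟨a.val, haj⟩, ⟨b.val, hbj⟩, ⟨c.val, hcj⟩, Fin.lt_def.mpr (by simp; omega),
        Fin.lt_def.mpr (by simp; omega), Fin.lt_def.mpr (by omega), Fin.lt_def.mpr (by omega)⟩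
    · -- π c = 0, contradiction with π b < π c
      rw [insFun_eq_val hj σ τ _ hcj] at l3
      omega
    · -- c above j
      have hcl : c.val - j - 1 < m - j := by omega
      have hcv : j + 1 ≤ (insFun m j hj σ τ c).val := by
        rw [insFun_gt_val hj σ τ c hcj hcl]
        omega
      rcases Nat.lt_trichotomy a.val j with haj | haj | haj
      · -- a below j: π a ≤ j < π c contradicts π c < π a
        rw [insFun_lt_val hj σ τ _ haj] at l4
        have := (σ ⟨a.val, haj⟩).isLt
        omega
      · rw [insFun_eq_val hj σ τ _ haj] at l4
        omega
      · -- all three above j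
        have hbj : j < b.val := by omega
        have hal : a.val - j - 1 < m - j := by omega
        have hbl : b.val - j - 1 < m - j := by omega
        have hcl : c.val - j - 1 < m - j := by omega
        rw [insFun_gt_val hj σ τ b hbj hbl, insFun_gt_val hj σ τ c hcj hcl] at l3
        rw [insFun_gt_val hj σ τ c hcj hcl, insFun_gt_val hj σ τ a haj hal] at l4
        exact hτ ⟨⟨a.val - j - 1, by omega⟩, ⟨b.val - j - 1, by omega⟩, ⟨c.val - j - 1, by omega⟩,
          Fin.lt_def.mpr (by simp; omega), Fin.lt_def.mpr (by simp; omega),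
          Fin.lt_def.mpr (by omega), Fin.lt_def.mpr (by omega)⟩

set_option maxHeartbeats 2000000 in
lemma exists_ins (m : ℕ) (π : Equiv.Perm (Fin (m + 1))) (hav : Avoids312 π) :
    ∃ (j : ℕ) (hj : j ≤ m) (σ : Equiv.Perm (Fin j)) (τ : Equiv.Perm (Fin (m - j))),
      Avoids312 σ ∧ Avoids312 τ ∧ insPerm m j hj σ τ = π := by
  rcases hJ : π.symm 0 with ⟨j, hjlt⟩
  have hj : j ≤ m := by omega
  have hπj : π ⟨j, hjlt⟩ = 0 := by rw [← hJ, Equiv.apply_symm_apply]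
  have hzero : ∀ w : Fin (m + 1), π w = 0 → w.val = j := by
    intro w hw
    have h : w = π.symm 0 := by rw [← hw, Equiv.symm_apply_apply]
    rw [h, hJ]
  have hne0 : ∀ w : Fin (m + 1), w.val ≠ j → π w ≠ 0 := fun w h hw => h (hzero w hw)
  have hne0' : ∀ w : Fin (m + 1), w.val ≠ j → 1 ≤ (π w).val := by
    intro w h
    have h0 := hne0 w h
    have h1 : (π w).val ≠ 0 := fun hh => h0 (Fin.ext (by simp [hh]))
    omega
  have s1 : ∀ u w : Fin (m + 1), u.val < j → j < w.val → π u < π w := by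
    intro u w hu hw
    have h0 : 1 ≤ (π w).val := hne0' w (by omega)
    have hne : (π u).val ≠ (π w).val := by
      intro h
      have := congrArg Fin.val (π.injective (Fin.ext h))
      omega
    by_contra hc
    have hv : ¬ (π u).val < (π w).val := fun h => hc (Fin.lt_def.mpr h)
    apply hav
    refine ⟨u, ⟨j, hjlt⟩, w, Fin.lt_def.mpr (by simpa using hu), Fin.lt_def.mpr (by simpa using hw),
      ?_, Fin.lt_def.mpr (by omega)⟩
    rw [hπj]
    exact Fin.pos_iff_ne_zero.mpr (hne0 w (by omega))
  have b2 : ∀ w : Fin (m + 1), j < w.val → j + 1 ≤ (π w).val := by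
    intro w hw
    have himg : (Finset.Iic (⟨j, hjlt⟩ : Fin (m + 1))).image π ⊆ Finset.Iio (π w) := by
      intro v hv
      obtain ⟨u, hu, rfl⟩ := Finset.mem_image.mp hv
      rw [Finset.mem_Iic] at hu
      rw [Finset.mem_Iio]
      have huj : u.val ≤ j := by simpa using Fin.le_def.mp hu
      rcases Nat.lt_or_ge u.val j with h | h
      · exact s1 u w h hw
      · have he : u = ⟨j, hjlt⟩ := Fin.ext (show u.val = j by omega)
        rw [he, hπj]
        exact Fin.pos_iff_ne_zero.mpr (hne0 w (by omega))
    have h2 : ((Finset.Iic (⟨j, hjlt⟩ : Fin (m + 1))).image π).card = j + 1 := by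
      rw [Finset.card_image_of_injective _ π.injective]
      simp [Fin.card_Iic]
    have h3 := Finset.card_le_card himg
    rw [h2, Fin.card_Iio] at h3
    exact h3
  have b1 : ∀ u : Fin (m + 1), u.val < j → 1 ≤ (π u).val ∧ (π u).val ≤ j := by
    intro u hu
    refine ⟨hne0' u (by omega), ?_⟩
    by_contra hc
    push_neg at hc
    have himg : (Finset.Ioi (⟨j, hjlt⟩ : Fin (m + 1))).image π ⊆
        Finset.Ioi (⟨j, hjlt⟩ : Fin (m + 1)) := by
      intro v hv
      obtain ⟨w, hw, rfl⟩ := Finset.mem_image.mp hv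
      rw [Finset.mem_Ioi] at hw ⊢
      have := b2 w (by simpa using Fin.lt_def.mp hw)
      exact Fin.lt_def.mpr (by simp; omega)
    have hcards : (Finset.Ioi (⟨j, hjlt⟩ : Fin (m + 1))).card ≤
        ((Finset.Ioi (⟨j, hjlt⟩ : Fin (m + 1))).image π).card := by
      rw [Finset.card_image_of_injective _ π.injective]
    have heq := Finset.eq_of_subset_of_card_le himg hcards
    have hmem : π u ∈ Finset.Ioi (⟨j, hjlt⟩ : Fin (m + 1)) :=
      Finset.mem_Ioi.mpr (Fin.lt_def.mpr (by simp; omega))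
    rw [← heq] at hmem
    obtain ⟨w, hw, hwu⟩ := Finset.mem_image.mp hmem
    have hval := congrArg Fin.val (π.injective hwu)
    rw [Finset.mem_Ioi] at hw
    have := Fin.lt_def.mp hw
    simp at this
    omega
  -- build σ and τ
  have hσinj : Function.Injective (fun x : Fin j => (⟨(π ⟨x.val, by omega⟩).val - 1,
      by have := (b1 ⟨x.val, by omega⟩ (by simpa using x.isLt)); omega⟩ : Fin j)) := by
    intro x y hxy
    have hv := congrArg Fin.val hxy
    simp only at hv
    have hx1 := b1 ⟨x.val, by omega⟩ (by simpa using x.isLt)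
    have hy1 := b1 ⟨y.val, by omega⟩ (by simpa using y.isLt)
    have he : π ⟨x.val, by omega⟩ = π ⟨y.val, by omega⟩ := Fin.ext (by omega)
    have := congrArg Fin.val (π.injective he)
    simp at this
    exact Fin.ext this
  have hτinj : Function.Injective (fun x : Fin (m - j) =>
      (⟨(π ⟨x.val + j + 1, by have := x.isLt; omega⟩).val - j - 1,
      by have := b2 ⟨x.val + j + 1, by have := x.isLt; omega⟩ (by simp);
         have := (π ⟨x.val + j + 1, by have := x.isLt; omega⟩).isLt; omega⟩ : Fin (m - j))) := by
    intro x y hxy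
    have hv := congrArg Fin.val hxy
    simp only at hv
    have hx1 := b2 ⟨x.val + j + 1, by have := x.isLt; omega⟩ (by simp)
    have hy1 := b2 ⟨y.val + j + 1, by have := y.isLt; omega⟩ (by simp)
    have he : π ⟨x.val + j + 1, by have := x.isLt; omega⟩
        = π ⟨y.val + j + 1, by have := y.isLt; omega⟩ := Fin.ext (by omega)
    have := congrArg Fin.val (π.injective he)
    simp at this
    exact Fin.ext this
  set σ : Equiv.Perm (Fin j) := Equiv.ofBijective _ (Finite.injective_iff_bijective.mp hσinj)
    with hσdef
  set τ : Equiv.Perm (Fin (m - j)) := Equiv.ofBijective _ (Finite.injective_iff_bijective.mp hτinj)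
    with hτdef
  have hσval : ∀ x : Fin j, (σ x).val = (π ⟨x.val, by omega⟩).val - 1 := fun x => rfl
  have hτval : ∀ x : Fin (m - j), (τ x).val
      = (π ⟨x.val + j + 1, by have := x.isLt; omega⟩).val - j - 1 := fun x => rfl
  refine ⟨j, hj, σ, τ, ?_, ?_, ?_⟩
  · -- Avoids312 σ
    rintro ⟨a, b, c, h1, h2, h3, h4⟩
    have ha := a.isLt; have hb := b.isLt; have hc := c.isLt
    have hav1 := b1 ⟨a.val, by omega⟩ (by simpa using ha)
    have hbv1 := b1 ⟨b.val, by omega⟩ (by simpa using hb)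
    have hcv1 := b1 ⟨c.val, by omega⟩ (by simpa using hc)
    have l3 := Fin.lt_def.mp h3; rw [hσval, hσval] at l3
    have l4 := Fin.lt_def.mp h4; rw [hσval, hσval] at l4
    apply hav
    refine ⟨⟨a.val, by omega⟩, ⟨b.val, by omega⟩, ⟨c.val, by omega⟩,
      Fin.lt_def.mpr (by simpa using Fin.lt_def.mp h1),
      Fin.lt_def.mpr (by simpa using Fin.lt_def.mp h2),
      Fin.lt_def.mpr (by omega), Fin.lt_def.mpr (by omega)⟩
  · -- Avoids312 τ
    rintro ⟨a, b, c, h1, h2, h3, h4⟩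
    have ha := a.isLt; have hb := b.isLt; have hc := c.isLt
    have hav1 := b2 ⟨a.val + j + 1, by omega⟩ (by simp)
    have hbv1 := b2 ⟨b.val + j + 1, by omega⟩ (by simp)
    have hcv1 := b2 ⟨c.val + j + 1, by omega⟩ (by simp)
    have hav2 := (π ⟨a.val + j + 1, by omega⟩).isLt
    have l3 := Fin.lt_def.mp h3; rw [hτval, hτval] at l3
    have l4 := Fin.lt_def.mp h4; rw [hτval, hτval] at l4
    apply hav
    refine ⟨⟨a.val + j + 1, by omega⟩, ⟨b.val + j + 1, by omega⟩, ⟨c.val + j + 1, by omega⟩,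
      Fin.lt_def.mpr (by simp; have := Fin.lt_def.mp h1; omega),
      Fin.lt_def.mpr (by simp; have := Fin.lt_def.mp h2; omega),
      Fin.lt_def.mpr (by omega), Fin.lt_def.mpr (by omega)⟩
  · -- insPerm = π
    apply Equiv.ext
    intro w
    apply Fin.ext
    rw [insPerm_apply]
    rcases Nat.lt_trichotomy w.val j with hw | hw | hw
    · rw [insFun_lt_val hj σ τ w hw, hσval]
      have hb1 := b1 ⟨w.val, by omega⟩ (by simpa using hw)
      have he : (⟨(⟨w.val, hw⟩ : Fin j).val, by omega⟩ : Fin (m + 1)) = w := Fin.ext rfl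
      rw [he] at hb1 ⊢
      omega
    · rw [insFun_eq_val hj σ τ w hw]
      have he : w = ⟨j, hjlt⟩ := Fin.ext hw
      rw [he, hπj]
      rfl
    · have hwl : w.val - j - 1 < m - j := by have := w.isLt; omega
      rw [insFun_gt_val hj σ τ w hw hwl, hτval]
      have he : (⟨(⟨w.val - j - 1, hwl⟩ : Fin (m - j)).val + j + 1, by
          have := w.isLt; omega⟩ : Fin (m + 1)) = w := Fin.ext (by simp; omega)
      rw [he]
      have := b2 w hw
      omega

noncomputable def nav (k : ℕ) : ℕ := Nat.card {π : Equiv.Perm (Fin k) // Avoids312 π}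

lemma nav_zero : nav 0 = 1 := by
  rw [nav, Nat.card_eq_one_iff_unique]
  constructor
  · constructor
    intro ⟨π, _⟩ ⟨ρ, _⟩
    apply Subtype.ext
    apply Equiv.ext
    intro x
    exact x.elim0
  · exact ⟨⟨1, by rintro ⟨i, _, _, _⟩; exact i.elim0⟩⟩

set_option maxHeartbeats 4000000 in
lemma nav_rec (m : ℕ) :
    nav (m + 1) = ∑ i ∈ Finset.range (m + 1), nav i * nav (m - i) := by
  classical
  haveI : ∀ i : Fin (m + 1), Fintype {σ : Equiv.Perm (Fin i.1) // Avoids312 σ} := by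
    intro i; exact Fintype.ofFinite _
  haveI : ∀ i : Fin (m + 1), Fintype {τ : Equiv.Perm (Fin (m - i.1)) // Avoids312 τ} := by
    intro i; exact Fintype.ofFinite _
  haveI : Fintype {π : Equiv.Perm (Fin (m + 1)) // Avoids312 π} := Fintype.ofFinite _
  set G : (Σ i : Fin (m + 1), {σ : Equiv.Perm (Fin i.1) // Avoids312 σ} ×
      {τ : Equiv.Perm (Fin (m - i.1)) // Avoids312 τ}) →
      {π : Equiv.Perm (Fin (m + 1)) // Avoids312 π} :=
    fun x => ⟨insPerm m x.1.1 (by have := x.1.isLt; omega) x.2.1.1 x.2.2.1,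
      (avoids_insPerm _ _ _).mpr ⟨x.2.1.2, x.2.2.2⟩⟩ with hG
  have hbij : Function.Bijective G := by
    constructor
    · rintro ⟨i, ⟨σ, hσ⟩, ⟨τ, hτ⟩⟩ ⟨i', ⟨σ', hσ'⟩, ⟨τ', hτ'⟩⟩ h
      have hi := i.isLt
      have hi' := i'.isLt
      have hg : insPerm m i.1 (by omega) σ τ = insPerm m i'.1 (by omega) σ' τ' :=
        congrArg Subtype.val h
      have hval : ∀ w : Fin (m + 1),
          (insFun m i.1 (by omega) σ τ w).val = (insFun m i'.1 (by omega) σ' τ' w).val := by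
        intro w
        have h2 := congrArg (fun (e : Equiv.Perm (Fin (m + 1))) => e w) hg
        simp only [insPerm_apply] at h2
        exact congrArg Fin.val h2
      have hjj : i.1 = i'.1 := by
        have h0 := hval ⟨i.1, by omega⟩
        rw [insFun_eq_val (by omega) σ τ _ rfl] at h0
        rcases Nat.lt_trichotomy i.1 i'.1 with hc | hc | hc
        · rw [insFun_lt_val (by omega) σ' τ' _
            (show (⟨i.1, by omega⟩ : Fin (m + 1)).val < i'.1 from hc)] at h0
          omega
        · exact hc
        · rw [insFun_gt_val (by omega) σ' τ' _
            (show i'.1 < (⟨i.1, by omega⟩ : Fin (m + 1)).val from hc)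
            (show (⟨i.1, by omega⟩ : Fin (m + 1)).val - i'.1 - 1 < m - i'.1 by simp; omega)] at h0
          omega
      have hii : i = i' := Fin.ext hjj
      subst hii
      have hσeq : σ = σ' := by
        apply Equiv.ext
        intro x
        have hx := x.isLt
        have h0 := hval ⟨x.val, by omega⟩
        rw [insFun_lt_val (by omega) σ τ _ (show (⟨x.val, by omega⟩ : Fin (m + 1)).val < i.1 from hx),
          insFun_lt_val (by omega) σ' τ' _ (show (⟨x.val, by omega⟩ : Fin (m + 1)).val < i.1 from hx)] at h0
        have e : (⟨(⟨x.val, by omega⟩ : Fin (m + 1)).val, hx⟩ : Fin i.1) = x := Fin.ext rfl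
        rw [e] at h0
        exact Fin.ext (by omega)
      subst hσeq
      have hτeq : τ = τ' := by
        apply Equiv.ext
        intro x
        have hx := x.isLt
        have h0 := hval ⟨x.val + i.1 + 1, by omega⟩
        rw [insFun_gt_val (by omega) σ τ _
            (show i.1 < (⟨x.val + i.1 + 1, by omega⟩ : Fin (m + 1)).val by simp)
            (show (⟨x.val + i.1 + 1, by omega⟩ : Fin (m + 1)).val - i.1 - 1 < m - i.1 by simp; omega),
          insFun_gt_val (by omega) σ τ' _
            (show i.1 < (⟨x.val + i.1 + 1, by omega⟩ : Fin (m + 1)).val by simp)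
            (show (⟨x.val + i.1 + 1, by omega⟩ : Fin (m + 1)).val - i.1 - 1 < m - i.1 by simp; omega)] at h0
        have e : (⟨(⟨x.val + i.1 + 1, by omega⟩ : Fin (m + 1)).val - i.1 - 1, by simp; omega⟩ :
            Fin (m - i.1)) = x := Fin.ext (by simp; omega)
        rw [e] at h0
        exact Fin.ext (by omega)
      subst hτeq
      rfl
    · rintro ⟨π, hav⟩
      obtain ⟨j, hj, σ, τ, hσ, hτ, heq⟩ := exists_ins m π hav
      exact ⟨⟨⟨j, by omega⟩, ⟨σ, hσ⟩, ⟨τ, hτ⟩⟩, Subtype.ext heq⟩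
  calc nav (m + 1) = Nat.card (Σ i : Fin (m + 1), {σ : Equiv.Perm (Fin i.1) // Avoids312 σ} ×
      {τ : Equiv.Perm (Fin (m - i.1)) // Avoids312 τ}) := (Nat.card_eq_of_bijective G hbij).symm
    _ = ∑ i : Fin (m + 1), nav i.1 * nav (m - i.1) := by
        rw [Nat.card_eq_fintype_card, Fintype.card_sigma]
        apply Finset.sum_congr rfl
        intro i _
        rw [Fintype.card_prod, ← Nat.card_eq_fintype_card, ← Nat.card_eq_fintype_card]
        rfl
    _ = ∑ i ∈ Finset.range (m + 1), nav i * nav (m - i) :=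
        Fin.sum_univ_eq_sum_range (fun i => nav i * nav (m - i)) (m + 1)

lemma nav_cat : ∀ k : ℕ, nav k = catalan k := by
  intro k
  induction k using Nat.strong_induction_on with
  | _ k ih =>
    match k with
    | 0 => rw [nav_zero, catalan_zero]
    | (k' + 1) =>
      rw [nav_rec k', catalan_succ k']
      rw [← Fin.sum_univ_eq_sum_range (fun i => nav i * nav (k' - i)) (k' + 1)]
      apply Finset.sum_congr rfl
      intro i _
      have := i.isLt
      rw [ih i.1 (by omega), ih (k' - i.1) (by omega)]


/-- **Theorem.** For every `n ≥ 3`, the number of triangulations of a convex `n`-gon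
equals the number of 312-avoiding permutations of `{1,…,n-2}`. -/
theorem card_triangulations_eq_card_avoids312 (n : ℕ) (hn : 3 ≤ n) :
    Nat.card {T : Finset (ℕ × ℕ) // IsTriangulation n T} =
      Nat.card {π : Equiv.Perm (Fin (n - 2)) // Avoids312 π} := by
  have h1 : ∀ T, IsTriangulation n T ↔ IsTriangOn 1 n T := by
    intro T
    unfold IsTriangulation IsTriangOn IsDiagonal
    constructor
    · rintro ⟨hc, hd, hnc⟩
      exact ⟨by omega, hd, hnc⟩
    · rintro ⟨hc, hd, hnc⟩
      exact ⟨by omega, hd, hnc⟩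
  rw [show (Nat.card {T : Finset (ℕ × ℕ) // IsTriangulation n T}) = t n from
    Nat.card_congr (Equiv.subtypeEquivRight h1), t_cat n (by omega),
    show (Nat.card {π : Equiv.Perm (Fin (n - 2)) // Avoids312 π}) = nav (n - 2) from rfl,
    nav_cat]
end

section
/- For every n ≥ 3, the number of triangulations of a convex n-gon (i.e., sets of n−3 pairwise noncrossing diagonals) equals the Catalan number C_{n−2} = (1/(n−1))·binom(2(n−2), n−2). -/
/-!
Work with the polygon on the vertices `lo, …, hi` for arbitrary `lo < hi`. A noncrossing family
of chords of it has at most `hi - lo - 1` members, and at most `hi - lo - 2` if it avoids the side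
`(lo, hi)`: the largest vertex `k` joined to `lo` (or `lo + 1`) is passed over by no chord, so the
family splits into chords of `lo, …, k` and of `k, …, hi`. In a triangulation of `lo, …, hi` these
bounds are attained, which forces a unique such `k` (the apex of the triangle on `(lo, hi)`), and
the triangulations with apex `k` correspond to pairs of triangulations of `lo, …, k` and
`k, …, hi`, each taken with its side. This is the Catalan recurrence
`C (d + 1) = ∑ C i * C (d - i)`.
-/

open Finset

namespace Triangulation

/-- A chord of the polygon with vertices `lo, …, hi`; unlike a diagonal, it may be the
side `(lo, hi)`. -/
def IsChord (lo hi : ℕ) (p : ℕ × ℕ) : Prop :=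
  lo ≤ p.1 ∧ p.1 + 2 ≤ p.2 ∧ p.2 ≤ hi

def Noncrossing (T : Finset (ℕ × ℕ)) : Prop :=
  (T : Set (ℕ × ℕ)).Pairwise fun p q => ¬Crosses p q

def IsTriangulationOn (lo hi : ℕ) (T : Finset (ℕ × ℕ)) : Prop :=
  T.card = hi - lo - 2 ∧ (∀ p ∈ T, IsChord lo hi p) ∧ (lo, hi) ∉ T ∧ Noncrossing T

/-- A triangulation of the polygon `lo, …, hi` together with its side `(lo, hi)`
(when `hi = lo + 1` there is no such side and the only one is `∅`). -/
def IsClosedTriangulationOn (lo hi : ℕ) (T : Finset (ℕ × ℕ)) : Prop :=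
  T.card = hi - lo - 1 ∧ (∀ p ∈ T, IsChord lo hi p) ∧ Noncrossing T

def Splits (k : ℕ) (T : Finset (ℕ × ℕ)) : Prop :=
  ∀ p ∈ T, p.2 ≤ k ∨ k ≤ p.1

instance (k : ℕ) : DecidablePred (Splits k) :=
  fun T => inferInstanceAs (Decidable (∀ p ∈ T, p.2 ≤ k ∨ k ≤ p.1))

theorem isTriangulation_iff_isTriangulationOn {n : ℕ} {T : Finset (ℕ × ℕ)} :
    IsTriangulation n T ↔ IsTriangulationOn 1 n T := by
  have hdiag : (∀ p ∈ T, IsDiagonal n p) ↔ (∀ p ∈ T, IsChord 1 n p) ∧ (1, n) ∉ T := by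
    simp only [IsDiagonal, IsChord, ← and_assoc, forall_and]
    refine and_congr_right' ⟨fun h hmem => h _ hmem ⟨rfl, rfl⟩, fun h p hp hpn => h ?_⟩
    rwa [show p = (1, n) from Prod.ext hpn.1 hpn.2] at hp
  simp only [IsTriangulation, IsTriangulationOn, Noncrossing, hdiag, Nat.sub_sub, and_assoc]
  rfl

theorem IsChord.of_snd_le {lo hi k : ℕ} {p : ℕ × ℕ} (h : IsChord lo hi p) (hk : p.2 ≤ k) :
    IsChord lo k p :=
  ⟨h.1, h.2.1, hk⟩

theorem IsChord.of_le_fst {lo hi k : ℕ} {p : ℕ × ℕ} (h : IsChord lo hi p) (hk : k ≤ p.1) :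
    IsChord k hi p :=
  ⟨hk, h.2.1, h.2.2⟩

theorem IsChord.mono {lo hi lo' hi' : ℕ} {p : ℕ × ℕ} (h : IsChord lo hi p) (hlo : lo' ≤ lo)
    (hhi : hi ≤ hi') : IsChord lo' hi' p :=
  ⟨hlo.trans h.1, h.2.1, h.2.2.trans hhi⟩

theorem forall_isChord_filter_snd_le {lo hi k : ℕ} {T : Finset (ℕ × ℕ)}
    (h : ∀ p ∈ T, IsChord lo hi p) : ∀ p ∈ {p ∈ T | p.2 ≤ k}, IsChord lo k p :=
  fun p hp => (h p (mem_filter.mp hp).1).of_snd_le (mem_filter.mp hp).2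

theorem forall_isChord_filter_le_fst {lo hi k : ℕ} {T : Finset (ℕ × ℕ)}
    (h : ∀ p ∈ T, IsChord lo hi p) : ∀ p ∈ {p ∈ T | k ≤ p.1}, IsChord k hi p :=
  fun p hp => (h p (mem_filter.mp hp).1).of_le_fst (mem_filter.mp hp).2

theorem not_crosses_of_le {p q : ℕ × ℕ} {k : ℕ} (hp : p.2 ≤ k) (hq : k ≤ q.1) :
    ¬Crosses p q := by
  unfold Crosses
  omega

theorem not_crosses_side {lo hi : ℕ} {q : ℕ × ℕ} (hq : IsChord lo hi q) :
    ¬Crosses (lo, hi) q := by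
  unfold Crosses IsChord at *
  omega

theorem Noncrossing.mono {S T : Finset (ℕ × ℕ)} (hT : Noncrossing T) (h : S ⊆ T) :
    Noncrossing S :=
  Set.Pairwise.mono (coe_subset.mpr h) hT

theorem Noncrossing.filter {T : Finset (ℕ × ℕ)} (hT : Noncrossing T) (q : ℕ × ℕ → Prop)
    [DecidablePred q] : Noncrossing {p ∈ T | q p} :=
  hT.mono (filter_subset _ _)

theorem Noncrossing.union {A B : Finset (ℕ × ℕ)} {k : ℕ} (hA : Noncrossing A)
    (hB : Noncrossing B) (hAk : ∀ p ∈ A, p.2 ≤ k) (hBk : ∀ q ∈ B, k ≤ q.1) :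
    Noncrossing (A ∪ B) := by
  rw [Noncrossing, coe_union, Set.pairwise_union]
  refine ⟨hA, hB, fun p hp q hq _ => ⟨not_crosses_of_le (hAk p hp) (hBk q hq), ?_⟩⟩
  exact fun h => not_crosses_of_le (hAk p hp) (hBk q hq) h.symm

theorem Noncrossing.insert_side {lo hi : ℕ} {T : Finset (ℕ × ℕ)} (hT : Noncrossing T)
    (hchord : ∀ p ∈ T, IsChord lo hi p) : Noncrossing (insert (lo, hi) T) := by
  rw [Noncrossing, coe_insert, Set.pairwise_insert]
  exact ⟨hT, fun q hq _ => ⟨not_crosses_side (hchord q hq),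
    fun h => not_crosses_side (hchord q hq) h.symm⟩⟩

theorem card_eq_card_filter_add_card_filter {lo hi k : ℕ} {T : Finset (ℕ × ℕ)}
    (hchord : ∀ p ∈ T, IsChord lo hi p) (hk : Splits k T) :
    T.card = {p ∈ T | p.2 ≤ k}.card + {p ∈ T | k ≤ p.1}.card := by
  rw [← card_union_of_disjoint (disjoint_filter.mpr fun p hp h1 h2 => by
    have := (hchord p hp).2.1; omega), ← filter_or, filter_true_of_mem hk]

/-- The vertex `k` is the largest one joined to `lo` by a chord of `T`, or `lo + 1`. -/
theorem exists_splits {lo hi : ℕ} {T : Finset (ℕ × ℕ)} (hchord : ∀ p ∈ T, IsChord lo hi p)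
    (hside : (lo, hi) ∉ T) (hT : Noncrossing T) (h : lo + 2 ≤ hi) :
    ∃ k, lo < k ∧ k < hi ∧ Splits k T := by
  rcases {p ∈ T | p.1 = lo}.eq_empty_or_nonempty with hS | hS
  · refine ⟨lo + 1, by omega, by omega, fun p hp => Or.inr ?_⟩
    have hne : p.1 ≠ lo := fun h => (filter_eq_empty_iff.mp hS) hp h
    have := (hchord p hp).1
    omega
  obtain ⟨⟨a, k⟩, hak, hmax⟩ := exists_max_image _ Prod.snd hS
  obtain ⟨hakT, rfl : a = lo⟩ := mem_filter.mp hak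
  have hkhi : k < hi := lt_of_le_of_ne (hchord _ hakT).2.2 fun h => hside (h ▸ hakT)
  refine ⟨k, by have := (hchord _ hakT).2.1; omega, hkhi, fun p hp => ?_⟩
  by_cases hp1 : p.1 = a
  · exact Or.inl (hmax p (mem_filter.mpr ⟨hp, hp1⟩))
  by_contra hover
  refine hT hakT hp (fun h => hp1 (congrArg Prod.fst h).symm) (Or.inl ?_)
  have := hchord p hp
  unfold IsChord at this
  simp only at hover ⊢
  omega

theorem card_le_sub_one_of_card_erase_le {lo hi : ℕ} {T : Finset (ℕ × ℕ)}
    (hchord : ∀ p ∈ T, IsChord lo hi p) (h : (T.erase (lo, hi)).card ≤ hi - lo - 2) :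
    T.card ≤ hi - lo - 1 := by
  by_cases hmem : (lo, hi) ∈ T
  · have := (hchord _ hmem).2.1
    rw [← card_erase_add_one hmem]
    omega
  · rw [erase_eq_of_notMem hmem] at h
    omega

theorem Noncrossing.card_le_sub_two {lo hi : ℕ} {T : Finset (ℕ × ℕ)} (hT : Noncrossing T)
    (hchord : ∀ p ∈ T, IsChord lo hi p) (hside : (lo, hi) ∉ T) : T.card ≤ hi - lo - 2 := by
  induction h : hi - lo using Nat.strong_induction_on generalizing lo hi T with
  | _ d ih =>
  subst h
  have card_le_sub_one : ∀ lo' hi' (S : Finset (ℕ × ℕ)), hi' - lo' < hi - lo →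
      S ⊆ T → (∀ p ∈ S, IsChord lo' hi' p) → S.card ≤ hi' - lo' - 1 :=
    fun lo' hi' S hlt hST hS => card_le_sub_one_of_card_erase_le hS <|
      ih _ hlt ((hT.mono hST).mono (erase_subset _ _))
        (fun p hp => hS p (mem_of_mem_erase hp)) (notMem_erase _ _) rfl
  rcases T.eq_empty_or_nonempty with rfl | ⟨p, hp⟩
  · simp
  obtain ⟨k, hlok, hkhi, hsplit⟩ := exists_splits hchord hside hT <| by
    have := hchord p hp; unfold IsChord at this; omega
  have hL := card_le_sub_one lo k _ (by omega) (filter_subset _ _)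
    (forall_isChord_filter_snd_le hchord)
  have hR := card_le_sub_one k hi _ (by omega) (filter_subset _ _)
    (forall_isChord_filter_le_fst hchord)
  rw [card_eq_card_filter_add_card_filter hchord hsplit]
  omega

theorem Noncrossing.card_le_sub_one {lo hi : ℕ} {T : Finset (ℕ × ℕ)} (hT : Noncrossing T)
    (hchord : ∀ p ∈ T, IsChord lo hi p) : T.card ≤ hi - lo - 1 :=
  card_le_sub_one_of_card_erase_le hchord <| (hT.mono (erase_subset _ _)).card_le_sub_two
    (fun p hp => hchord p (mem_of_mem_erase hp)) (notMem_erase _ _)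

theorem IsTriangulationOn.not_splits_of_lt {lo hi j j' : ℕ} {T : Finset (ℕ × ℕ)}
    (hT : IsTriangulationOn lo hi T) (hj : lo < j) (hjj' : j < j') (hj' : j' < hi)
    (hsj : Splits j T) : ¬Splits j' T := by
  intro hsj'
  obtain ⟨hcard, hchord, -, hnc⟩ := hT
  have hRchord := forall_isChord_filter_le_fst (k := j) hchord
  have hRsplit : Splits j' {p ∈ T | j ≤ p.1} := fun p hp => hsj' p (mem_filter.mp hp).1
  rw [card_eq_card_filter_add_card_filter hchord hsj,
    card_eq_card_filter_add_card_filter hRchord hRsplit] at hcard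
  have := (hnc.filter _).card_le_sub_one (forall_isChord_filter_snd_le (k := j) hchord)
  have := ((hnc.filter _).filter _).card_le_sub_one
    (forall_isChord_filter_snd_le (k := j') hRchord)
  have := ((hnc.filter _).filter _).card_le_sub_one
    (forall_isChord_filter_le_fst (k := j') hRchord)
  omega

theorem IsTriangulationOn.isClosedTriangulationOn_filter {lo hi k : ℕ} {T : Finset (ℕ × ℕ)}
    (hT : IsTriangulationOn lo hi T) (hlo : lo < k) (hhi : k < hi) (hk : Splits k T) :
    IsClosedTriangulationOn lo k {p ∈ T | p.2 ≤ k} ∧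
      IsClosedTriangulationOn k hi {p ∈ T | k ≤ p.1} := by
  obtain ⟨hcard, hchord, -, hnc⟩ := hT
  have hL := forall_isChord_filter_snd_le (k := k) hchord
  have hR := forall_isChord_filter_le_fst (k := k) hchord
  have := (hnc.filter _).card_le_sub_one hL
  have := (hnc.filter _).card_le_sub_one hR
  rw [card_eq_card_filter_add_card_filter hchord hk] at hcard
  exact ⟨⟨by omega, hL, hnc.filter _⟩, ⟨by omega, hR, hnc.filter _⟩⟩

theorem filter_snd_le_union {hi k : ℕ} {A B : Finset (ℕ × ℕ)} (hA : ∀ p ∈ A, p.2 ≤ k)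
    (hB : ∀ p ∈ B, IsChord k hi p) : {p ∈ A ∪ B | p.2 ≤ k} = A := by
  rw [filter_union, filter_true_of_mem hA, filter_false_of_mem fun p hp => by
    have := hB p hp; unfold IsChord at this; omega, union_empty]

theorem filter_le_fst_union {lo k : ℕ} {A B : Finset (ℕ × ℕ)} (hA : ∀ p ∈ A, IsChord lo k p)
    (hB : ∀ p ∈ B, k ≤ p.1) : {p ∈ A ∪ B | k ≤ p.1} = B := by
  rw [filter_union, filter_true_of_mem hB, filter_false_of_mem fun p hp => by
    have := hA p hp; unfold IsChord at this; omega, empty_union]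

theorem IsClosedTriangulationOn.isTriangulationOn_union {lo hi k : ℕ} {A B : Finset (ℕ × ℕ)}
    (hA : IsClosedTriangulationOn lo k A) (hB : IsClosedTriangulationOn k hi B)
    (hlo : lo < k) (hhi : k < hi) : IsTriangulationOn lo hi (A ∪ B) ∧ Splits k (A ∪ B) := by
  obtain ⟨hAcard, hAchord, hAnc⟩ := hA
  obtain ⟨hBcard, hBchord, hBnc⟩ := hB
  have hsplit : Splits k (A ∪ B) := fun p hp =>
    (mem_union.mp hp).imp (fun h => (hAchord p h).2.2) fun h => (hBchord p h).1
  have hdisj : Disjoint A B := disjoint_left.mpr fun p hpA hpB => by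
    have := hAchord p hpA; have := hBchord p hpB; unfold IsChord at *; omega
  refine ⟨⟨?_, fun p hp => ?_, fun hmem => ?_, ?_⟩, hsplit⟩
  · rw [card_union_of_disjoint hdisj]; omega
  · rcases mem_union.mp hp with h | h
    · exact (hAchord p h).mono le_rfl hhi.le
    · exact (hBchord p h).mono hlo.le le_rfl
  · rcases hsplit _ hmem with h | h <;> simp only at h <;> omega
  · exact hAnc.union hBnc (fun p hp => (hAchord p hp).2.2) fun p hp => (hBchord p hp).1

theorem IsClosedTriangulationOn.side_mem {lo hi : ℕ} {T : Finset (ℕ × ℕ)}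
    (hT : IsClosedTriangulationOn lo hi T) (h : lo + 2 ≤ hi) : (lo, hi) ∈ T := by
  by_contra hside
  have := hT.2.2.card_le_sub_two hT.2.1 hside
  have := hT.1
  omega

theorem IsClosedTriangulationOn.isTriangulationOn_erase {lo hi : ℕ} {T : Finset (ℕ × ℕ)}
    (hT : IsClosedTriangulationOn lo hi T) (h : lo + 2 ≤ hi) :
    IsTriangulationOn lo hi (T.erase (lo, hi)) := by
  refine ⟨?_, fun p hp => hT.2.1 p (mem_of_mem_erase hp), notMem_erase _ _,
    hT.2.2.mono (erase_subset _ _)⟩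
  rw [card_erase_of_mem (hT.side_mem h), hT.1]
  omega

theorem IsTriangulationOn.isClosedTriangulationOn_insert {lo hi : ℕ} {T : Finset (ℕ × ℕ)}
    (hT : IsTriangulationOn lo hi T) (h : lo + 2 ≤ hi) :
    IsClosedTriangulationOn lo hi (insert (lo, hi) T) := by
  obtain ⟨hcard, hchord, hside, hnc⟩ := hT
  refine ⟨?_, fun p hp => ?_, hnc.insert_side hchord⟩
  · rw [card_insert_of_notMem hside]; omega
  · rcases mem_insert.mp hp with rfl | hp
    · exact ⟨le_rfl, h, le_rfl⟩
    · exact hchord p hp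

theorem subset_Icc_product {lo hi : ℕ} {T : Finset (ℕ × ℕ)} (h : ∀ p ∈ T, IsChord lo hi p) :
    T ⊆ Icc lo hi ×ˢ Icc lo hi := fun p hp => by
  have := h p hp
  unfold IsChord at this
  simp only [mem_product, mem_Icc]
  omega

open Classical in
noncomputable def triangulationsOn (lo hi : ℕ) : Finset (Finset (ℕ × ℕ)) :=
  {T ∈ (Icc lo hi ×ˢ Icc lo hi).powerset | IsTriangulationOn lo hi T}

open Classical in
noncomputable def closedTriangulationsOn (lo hi : ℕ) : Finset (Finset (ℕ × ℕ)) :=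
  {T ∈ (Icc lo hi ×ˢ Icc lo hi).powerset | IsClosedTriangulationOn lo hi T}

theorem mem_triangulationsOn {lo hi : ℕ} {T : Finset (ℕ × ℕ)} :
    T ∈ triangulationsOn lo hi ↔ IsTriangulationOn lo hi T := by
  classical
  rw [triangulationsOn, mem_filter, mem_powerset]
  exact and_iff_right_of_imp fun hT => subset_Icc_product hT.2.1

theorem mem_closedTriangulationsOn {lo hi : ℕ} {T : Finset (ℕ × ℕ)} :
    T ∈ closedTriangulationsOn lo hi ↔ IsClosedTriangulationOn lo hi T := by
  classical
  rw [closedTriangulationsOn, mem_filter, mem_powerset]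
  exact and_iff_right_of_imp fun hT => subset_Icc_product hT.2.1

theorem card_filter_splits_triangulationsOn {lo hi k : ℕ} (hlo : lo < k) (hhi : k < hi) :
    {T ∈ triangulationsOn lo hi | Splits k T}.card =
      (closedTriangulationsOn lo k).card * (closedTriangulationsOn k hi).card := by
  rw [← card_product]
  refine card_nbij' (fun T => ({p ∈ T | p.2 ≤ k}, {p ∈ T | k ≤ p.1})) (fun P => P.1 ∪ P.2)
    (fun T hT => ?_) (fun P hP => ?_) (fun T hT => ?_) (fun P hP => ?_)
  · simp only [coe_filter, Set.mem_ofPred_eq, mem_triangulationsOn] at hT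
    simp only [coe_product, Set.mem_prod, mem_coe, mem_closedTriangulationsOn]
    exact hT.1.isClosedTriangulationOn_filter hlo hhi hT.2
  · simp only [coe_product, Set.mem_prod, mem_coe, mem_closedTriangulationsOn] at hP
    simp only [coe_filter, Set.mem_ofPred_eq, mem_triangulationsOn]
    exact hP.1.isTriangulationOn_union hP.2 hlo hhi
  · simp only [coe_filter, Set.mem_ofPred_eq, mem_triangulationsOn] at hT
    exact (filter_or _ _ T).symm.trans (filter_true_of_mem hT.2)
  · simp only [coe_product, Set.mem_prod, mem_coe, mem_closedTriangulationsOn] at hP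
    obtain ⟨⟨-, hA, -⟩, ⟨-, hB, -⟩⟩ := hP
    exact Prod.ext (filter_snd_le_union (fun p hp => (hA p hp).2.2) hB)
      (filter_le_fst_union hA fun p hp => (hB p hp).1)

theorem card_triangulationsOn_eq_sum {lo hi : ℕ} (h : lo + 2 ≤ hi) :
    (triangulationsOn lo hi).card =
      ∑ k ∈ Ioo lo hi, (closedTriangulationsOn lo k).card * (closedTriangulationsOn k hi).card := by
  have hcover : triangulationsOn lo hi =
      (Ioo lo hi).biUnion fun k => {T ∈ triangulationsOn lo hi | Splits k T} := by
    ext T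
    simp only [mem_biUnion, mem_filter, mem_Ioo]
    refine ⟨fun hT => ?_, fun ⟨_, _, hT, _⟩ => hT⟩
    obtain ⟨-, hchord, hside, hnc⟩ := mem_triangulationsOn.mp hT
    obtain ⟨k, hlok, hkhi, hsplit⟩ := exists_splits hchord hside hnc h
    exact ⟨k, ⟨hlok, hkhi⟩, hT, hsplit⟩
  rw [hcover, card_biUnion]
  · exact sum_congr rfl fun k hk =>
      card_filter_splits_triangulationsOn (mem_Ioo.mp hk).1 (mem_Ioo.mp hk).2
  · intro j hj j' hj' hne
    simp only [coe_Ioo, Set.mem_Ioo] at hj hj'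
    refine disjoint_filter.mpr fun T hT hsj hsj' => ?_
    have hT' := mem_triangulationsOn.mp hT
    rcases lt_or_gt_of_ne hne with hlt | hlt
    · exact hT'.not_splits_of_lt hj.1 hlt hj'.2 hsj hsj'
    · exact hT'.not_splits_of_lt hj'.1 hlt hj.2 hsj' hsj

theorem card_closedTriangulationsOn_eq_card_triangulationsOn {lo hi : ℕ} (h : lo + 2 ≤ hi) :
    (closedTriangulationsOn lo hi).card = (triangulationsOn lo hi).card := by
  refine card_nbij' (fun T => T.erase (lo, hi)) (insert (lo, hi)) (fun T hT => ?_)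
    (fun T hT => ?_) (fun T hT => ?_) (fun T hT => ?_)
  · exact mem_triangulationsOn.mpr ((mem_closedTriangulationsOn.mp hT).isTriangulationOn_erase h)
  · exact mem_closedTriangulationsOn.mpr
      ((mem_triangulationsOn.mp hT).isClosedTriangulationOn_insert h)
  · exact insert_erase ((mem_closedTriangulationsOn.mp hT).side_mem h)
  · exact erase_insert (mem_triangulationsOn.mp hT).2.2.1

theorem closedTriangulationsOn_self_add_one (lo : ℕ) :
    closedTriangulationsOn lo (lo + 1) = {∅} := by
  ext T
  rw [mem_closedTriangulationsOn, mem_singleton]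
  refine ⟨fun hT => eq_empty_of_forall_notMem fun p hp => ?_, ?_⟩
  · have := hT.2.1 p hp
    unfold IsChord at this
    omega
  · rintro rfl
    exact ⟨by simp, by simp, by simp [Noncrossing]⟩

theorem sum_Ioo_catalan_mul_catalan {lo hi : ℕ} (h : lo + 2 ≤ hi) :
    ∑ k ∈ Ioo lo hi, catalan (k - lo - 1) * catalan (hi - k - 1) = catalan (hi - lo - 1) := by
  obtain ⟨n, rfl⟩ : ∃ n, hi = lo + n + 2 := ⟨hi - lo - 2, by omega⟩
  rw [← Ico_add_one_left_eq_Ioo, sum_Ico_eq_sum_range, show lo + n + 2 - lo - 1 = n + 1 by omega,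
    catalan_succ', Nat.sum_antidiagonal_eq_sum_range_succ_mk]
  refine sum_congr (by congr 1; omega) fun i hi => ?_
  congr 2 <;> omega

theorem card_closedTriangulationsOn {lo hi : ℕ} (h : lo < hi) :
    (closedTriangulationsOn lo hi).card = catalan (hi - lo - 1) := by
  induction hd : hi - lo using Nat.strong_induction_on generalizing lo hi with
  | _ d ih =>
  subst hd
  rcases (Nat.succ_le_of_lt h).eq_or_lt with rfl | h2
  · simp [closedTriangulationsOn_self_add_one]
  rw [card_closedTriangulationsOn_eq_card_triangulationsOn h2, card_triangulationsOn_eq_sum h2,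
    ← sum_Ioo_catalan_mul_catalan h2]
  refine sum_congr rfl fun k hk => ?_
  rw [mem_Ioo] at hk
  rw [ih _ (by omega) hk.1 rfl, ih _ (by omega) hk.2 rfl]

end Triangulation

/-- **Theorem.** For every `n ≥ 3`, the number of triangulations of a convex `n`-gon
equals the Catalan number `C_{n-2} = (1/(n-1)) * binom(2(n-2), n-2)`. -/
theorem card_triangulations_eq_catalan (n : ℕ) (hn : 3 ≤ n) :
    Nat.card {T : Finset (ℕ × ℕ) // IsTriangulation n T} =
      (2 * (n - 2)).choose (n - 2) / (n - 1) := by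
  calc Nat.card {T : Finset (ℕ × ℕ) // IsTriangulation n T}
      = (Triangulation.triangulationsOn 1 n).card := by
        rw [← Nat.card_eq_finsetCard]
        exact Nat.card_congr (Equiv.subtypeEquivRight fun T =>
          Triangulation.isTriangulation_iff_isTriangulationOn.trans
            Triangulation.mem_triangulationsOn.symm)
    _ = catalan (n - 2) := by
        rw [← Triangulation.card_closedTriangulationsOn_eq_card_triangulationsOn hn,
          Triangulation.card_closedTriangulationsOn (by omega), Nat.sub_sub]
    _ = (2 * (n - 2)).choose (n - 2) / (n - 1) := by
        rw [catalan_eq_centralBinom_div, Nat.centralBinom_eq_two_mul_choose,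
          show n - 2 + 1 = n - 1 by omega]
end

section
/- For every n ≥ 1, the number of 312-avoiding permutations of {1,…,2n} whose up/down pattern is the alternating word DUDU⋯UD (of length 2n−1, starting and ending with D) equals the number of 312-avoiding permutations of {1,…,n}. -/
/-- A permutation is alternating (down-up), i.e. its up/down pattern is `DUDU⋯UD`:
in 0-indexed positions, consecutive entries descend at even positions and ascend at
odd positions, so that `π(1) > π(2) < π(3) > ⋯` in 1-indexed terms. -/
def DownUp {m : ℕ} (π : Equiv.Perm (Fin m)) : Prop :=
  ∀ i j : Fin m, (j : ℕ) = (i : ℕ) + 1 →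
    (if Even (i : ℕ) then π j < π i else π i < π j)

/-!
In a down-up 312-avoiding permutation `π` of length `2n` the peaks increase from left to
right, and `π` is determined by the relative order `σ` of its valleys, which is again
312-avoiding: valley `u` lies below peak `t` exactly when `σ u ≤ max σ[0..t]`. Conversely, for
any 312-avoiding `σ`, ranking valley `t` by the key `(σ t, 0)` and peak `t` by
`(max σ[0..t], t + 1)` lexicographically produces a down-up 312-avoiding permutation whose
valleys have pattern `σ`.
-/

open Equiv Function

theorem Equiv.Perm.eq_of_lt_imp_lt {m : ℕ} {σ τ : Perm (Fin m)}
    (h : ∀ i j, σ i < σ j → τ i < τ j) : σ = τ := by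
  have hmono : StrictMono (σ.symm.trans τ) := fun a b hab =>
    h _ _ (by simpa using hab)
  have := (Perm.monotone_iff _).mp hmono.monotone
  refine Equiv.ext fun i => ?_
  simpa using (congrArg (fun ρ : Perm (Fin m) => ρ (σ i)) this).symm

noncomputable def rankPerm {m : ℕ} {α : Type*} [LinearOrder α] (f : Fin m → α) :
    Perm (Fin m) :=
  (Tuple.sort f).symm

section rankPerm

variable {m : ℕ} {α : Type*} [LinearOrder α] {f : Fin m → α}

theorem rankPerm_lt_rankPerm_of_lt {i j : Fin m} (h : f i < f j) :
    rankPerm f i < rankPerm f j := by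
  by_contra! hle
  have hfji : f j ≤ f i := by simpa [rankPerm] using Tuple.monotone_sort f hle
  exact (hfji.trans_lt h).false

theorem rankPerm_lt_rankPerm_iff (hf : Injective f) {i j : Fin m} :
    rankPerm f i < rankPerm f j ↔ f i < f j := by
  refine ⟨fun h => ?_, rankPerm_lt_rankPerm_of_lt⟩
  by_contra! hle
  rcases hle.lt_or_eq with hlt | heq
  · exact (rankPerm_lt_rankPerm_of_lt hlt).asymm h
  · exact h.ne (by rw [hf heq])

theorem avoids312_rankPerm (hf : Injective f)
    (h : ∀ i j k, i < j → j < k → f j < f k → ¬ f k < f i) : Avoids312 (rankPerm f) := by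
  rintro ⟨i, j, k, hij, hjk, hjk', hki⟩
  rw [rankPerm_lt_rankPerm_iff hf] at hjk' hki
  exact h i j k hij hjk hjk' hki

end rankPerm

section Positions

variable {n : ℕ}

def peakIdx (t : Fin n) : Fin (2 * n) := ⟨2 * t, by omega⟩

def valleyIdx (t : Fin n) : Fin (2 * n) := ⟨2 * t + 1, by omega⟩

theorem peakIdx_or_valleyIdx (p : Fin (2 * n)) :
    (∃ t, p = peakIdx t) ∨ ∃ t, p = valleyIdx t := by
  rcases Nat.even_or_odd' p with ⟨t, ht | ht⟩
  · exact .inl ⟨⟨t, by omega⟩, Fin.ext ht⟩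
  · exact .inr ⟨⟨t, by omega⟩, Fin.ext ht⟩

@[simp] theorem peakIdx_lt_peakIdx {t u : Fin n} : peakIdx t < peakIdx u ↔ t < u := by
  simp only [peakIdx, Fin.lt_def]; omega

@[simp] theorem valleyIdx_lt_valleyIdx {t u : Fin n} : valleyIdx t < valleyIdx u ↔ t < u := by
  simp only [valleyIdx, Fin.lt_def]; omega

@[simp] theorem peakIdx_lt_valleyIdx {t u : Fin n} : peakIdx t < valleyIdx u ↔ t ≤ u := by
  simp only [peakIdx, valleyIdx, Fin.lt_def, Fin.le_def]; omega

@[simp] theorem valleyIdx_lt_peakIdx {t u : Fin n} : valleyIdx t < peakIdx u ↔ t < u := by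
  simp only [peakIdx, valleyIdx, Fin.lt_def]; omega

theorem valleyIdx_injective : Injective (valleyIdx (n := n)) := by
  intro t u h
  simpa [valleyIdx, Fin.ext_iff] using h

theorem downUp_iff {π : Perm (Fin (2 * n))} :
    DownUp π ↔ (∀ t, π (valleyIdx t) < π (peakIdx t)) ∧
      ∀ t u : Fin n, (u : ℕ) = t + 1 → π (valleyIdx t) < π (peakIdx u) := by
  constructor
  · intro h
    refine ⟨fun t => ?_, fun t u htu => ?_⟩
    · simpa [peakIdx] using h (peakIdx t) (valleyIdx t) rfl
    · have := h (valleyIdx t) (peakIdx u) (by simp only [valleyIdx, peakIdx]; omega)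
      simpa [valleyIdx, Nat.even_add_one] using this
  · rintro ⟨hpeak, hvalley⟩ i j hij
    rcases peakIdx_or_valleyIdx i with ⟨t, rfl⟩ | ⟨t, rfl⟩
    · have : j = valleyIdx t := Fin.ext hij
      simpa [peakIdx, this] using hpeak t
    · have hu : 2 * (t : ℕ) + 2 < 2 * n := by simp only [valleyIdx] at hij; omega
      have : j = peakIdx ⟨t + 1, by omega⟩ :=
        Fin.ext (by simp only [valleyIdx, peakIdx] at hij ⊢; omega)
      simpa [valleyIdx, Nat.even_add_one, this] using hvalley t _ rfl

end Positions

section Forward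

variable {n : ℕ} (σ : Perm (Fin n))

def prefixMax (t : Fin n) : Fin n := (Finset.Iic t).sup' Finset.nonempty_Iic σ

theorem le_prefixMax {j t : Fin n} (h : j ≤ t) : σ j ≤ prefixMax σ t :=
  Finset.le_sup' σ (Finset.mem_Iic.mpr h)

theorem exists_eq_prefixMax (t : Fin n) : ∃ j ≤ t, σ j = prefixMax σ t := by
  obtain ⟨j, hj, h⟩ := Finset.exists_mem_eq_sup' (Finset.nonempty_Iic (a := t)) σ
  exact ⟨j, Finset.mem_Iic.mp hj, h.symm⟩

theorem prefixMax_mono : Monotone (prefixMax σ) := fun _ _ h =>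
  Finset.sup'_mono σ (Finset.Iic_subset_Iic.mpr h) Finset.nonempty_Iic

def downUpKey (p : Fin (2 * n)) : Fin n ×ₗ ℕ :=
  let t : Fin n := ⟨p / 2, by omega⟩
  if Even (p : ℕ) then toLex (prefixMax σ t, t + 1) else toLex (σ t, 0)

theorem downUpKey_peakIdx (t : Fin n) :
    downUpKey σ (peakIdx t) = toLex (prefixMax σ t, (t : ℕ) + 1) := by
  simp [downUpKey, peakIdx]

theorem downUpKey_valleyIdx (t : Fin n) :
    downUpKey σ (valleyIdx t) = toLex (σ t, 0) := by
  simp only [downUpKey, valleyIdx, Nat.not_even_bit1, if_false]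
  congr
  omega

@[simp] theorem downUpKey_peakIdx_lt_peakIdx {t u : Fin n} :
    downUpKey σ (peakIdx t) < downUpKey σ (peakIdx u) ↔ t < u := by
  simp only [downUpKey_peakIdx, Prod.Lex.toLex_lt_toLex, add_lt_add_iff_right, Fin.val_fin_lt]
  constructor
  · rintro (h | ⟨-, h⟩)
    · exact lt_of_not_ge fun hut => h.not_ge (prefixMax_mono σ hut)
    · exact h
  · intro h
    rcases (prefixMax_mono σ h.le).lt_or_eq with h' | h'
    exacts [.inl h', .inr ⟨h', h⟩]

@[simp] theorem downUpKey_valleyIdx_lt_valleyIdx {t u : Fin n} :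
    downUpKey σ (valleyIdx t) < downUpKey σ (valleyIdx u) ↔ σ t < σ u := by
  simp [downUpKey_valleyIdx, Prod.Lex.toLex_lt_toLex]

@[simp] theorem downUpKey_valleyIdx_lt_peakIdx {u t : Fin n} :
    downUpKey σ (valleyIdx u) < downUpKey σ (peakIdx t) ↔ σ u ≤ prefixMax σ t := by
  simp only [downUpKey_valleyIdx, downUpKey_peakIdx, Prod.Lex.toLex_lt_toLex, Nat.zero_lt_succ,
    and_true, le_iff_lt_or_eq]

@[simp] theorem downUpKey_peakIdx_lt_valleyIdx {t u : Fin n} :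
    downUpKey σ (peakIdx t) < downUpKey σ (valleyIdx u) ↔ prefixMax σ t < σ u := by
  simp [downUpKey_valleyIdx, downUpKey_peakIdx, Prod.Lex.toLex_lt_toLex]

theorem downUpKey_injective : Injective (downUpKey σ) := by
  intro p q h
  rcases peakIdx_or_valleyIdx p with ⟨t, rfl⟩ | ⟨t, rfl⟩ <;>
    rcases peakIdx_or_valleyIdx q with ⟨u, rfl⟩ | ⟨u, rfl⟩ <;>
    simp [downUpKey_peakIdx, downUpKey_valleyIdx, Fin.ext_iff] at h
  · rw [Fin.ext h.2]
  · rw [Fin.ext h]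

theorem downUpKey_lt_peakIdx {p : Fin (2 * n)} {t : Fin n} (h : p < peakIdx t) :
    downUpKey σ p < downUpKey σ (peakIdx t) := by
  rcases peakIdx_or_valleyIdx p with ⟨u, rfl⟩ | ⟨u, rfl⟩
  · simpa using h
  · exact (downUpKey_valleyIdx_lt_peakIdx σ).mpr (le_prefixMax σ (valleyIdx_lt_peakIdx.mp h).le)

variable {σ}

theorem downUpKey_not_312 (hσ : Avoids312 σ) {a b c : Fin (2 * n)} (hab : a < b) (hbc : b < c)
    (hbc' : downUpKey σ b < downUpKey σ c) : ¬ downUpKey σ c < downUpKey σ a := by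
  intro hca
  rcases peakIdx_or_valleyIdx c with ⟨k, rfl⟩ | ⟨k, rfl⟩
  · exact (downUpKey_lt_peakIdx σ (hab.trans hbc)).asymm hca
  rcases peakIdx_or_valleyIdx b with ⟨j, rfl⟩ | ⟨j, rfl⟩
  · exact (downUpKey_lt_peakIdx σ hab).asymm (hbc'.trans hca)
  rw [valleyIdx_lt_valleyIdx] at hbc
  rw [downUpKey_valleyIdx_lt_valleyIdx] at hbc'
  rcases peakIdx_or_valleyIdx a with ⟨s, rfl⟩ | ⟨s, rfl⟩
  · rw [downUpKey_valleyIdx_lt_peakIdx] at hca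
    rw [peakIdx_lt_valleyIdx] at hab
    -- the prefix maximum `σ m` on `[0, s]` completes a 312 pattern `m < j < k` in `σ`
    obtain ⟨m, hms, hm⟩ := exists_eq_prefixMax σ s
    rw [← hm] at hca
    have hmk : σ k < σ m := hca.lt_of_ne (σ.injective.ne (hms.trans_lt (hab.trans_lt hbc)).ne')
    have hmj : m < j := (hms.trans hab).lt_of_ne (by rintro rfl; exact (hbc'.trans hmk).false)
    exact hσ ⟨m, j, k, hmj, hbc, hbc', hmk⟩
  · rw [downUpKey_valleyIdx_lt_valleyIdx] at hca
    exact hσ ⟨s, j, k, by simpa using hab, hbc, hbc', hca⟩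

noncomputable def downUpOf (σ : Perm (Fin n)) : Perm (Fin (2 * n)) := rankPerm (downUpKey σ)

theorem avoids312_downUpOf (hσ : Avoids312 σ) : Avoids312 (downUpOf σ) :=
  avoids312_rankPerm (downUpKey_injective σ) fun _ _ _ => downUpKey_not_312 hσ

theorem downUp_downUpOf : DownUp (downUpOf σ) := by
  refine downUp_iff.mpr ⟨fun t => ?_, fun t u htu => ?_⟩ <;>
    refine rankPerm_lt_rankPerm_of_lt ((downUpKey_valleyIdx_lt_peakIdx σ).mpr (le_prefixMax σ ?_))
  · exact le_rfl
  · exact Fin.le_def.mpr (by omega)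

end Forward

section Backward

variable {n : ℕ} {π : Perm (Fin (2 * n))}

theorem peakIdx_strictMono (hπ : Avoids312 π) (hdu : DownUp π) :
    StrictMono fun t => π (peakIdx t) := by
  intro t u htu
  -- the valley just before peak `u` would otherwise complete a 312 pattern with peak `t`
  let v : Fin n := ⟨u - 1, by omega⟩
  have hvu : π (valleyIdx v) < π (peakIdx u) := (downUp_iff.mp hdu).2 v u (by simp [v]; omega)
  have htv : peakIdx t < valleyIdx v :=
    peakIdx_lt_valleyIdx.mpr (by simp only [Fin.le_def, v]; omega)
  have hvu' : valleyIdx v < peakIdx u :=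
    valleyIdx_lt_peakIdx.mpr (by simp only [Fin.lt_def, v]; omega)
  refine (π.injective.ne (peakIdx_lt_peakIdx.mpr htu).ne).lt_or_gt.resolve_right fun hut => ?_
  exact hπ ⟨peakIdx t, valleyIdx v, peakIdx u, htv, hvu', hvu, hut⟩

variable (π) in
noncomputable def valleyPattern : Perm (Fin n) := rankPerm fun t => π (valleyIdx t)

theorem valleyPattern_lt_iff {t u : Fin n} :
    valleyPattern π t < valleyPattern π u ↔ π (valleyIdx t) < π (valleyIdx u) :=
  rankPerm_lt_rankPerm_iff (π.injective.comp valleyIdx_injective)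

theorem avoids312_valleyPattern (hπ : Avoids312 π) : Avoids312 (valleyPattern π) :=
  avoids312_rankPerm (π.injective.comp valleyIdx_injective) fun i j k hij hjk hjk' hki =>
    hπ ⟨valleyIdx i, valleyIdx j, valleyIdx k, by simpa, by simpa, hjk', hki⟩

theorem valleyPattern_downUpOf (σ : Perm (Fin n)) : valleyPattern (downUpOf σ) = σ :=
  (Perm.eq_of_lt_imp_lt fun _ _ h => rankPerm_lt_rankPerm_of_lt <| rankPerm_lt_rankPerm_of_lt <|
    (downUpKey_valleyIdx_lt_valleyIdx σ).mpr h).symm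

theorem valleyPattern_le_prefixMax (hπ : Avoids312 π) {u t : Fin n}
    (h : π (valleyIdx u) < π (peakIdx t)) :
    valleyPattern π u ≤ prefixMax (valleyPattern π) t := by
  rcases le_or_gt u t with hut | htu
  · exact le_prefixMax _ hut
  refine le_trans (le_of_lt (valleyPattern_lt_iff.mpr ?_)) (le_prefixMax _ le_rfl)
  refine (π.injective.ne (valleyIdx_injective.ne htu.ne')).lt_or_gt.resolve_right fun htu' => ?_
  exact hπ ⟨peakIdx t, valleyIdx t, valleyIdx u, by simp, by simpa, htu', h⟩

theorem prefixMax_lt_valleyPattern (hπ : Avoids312 π) (hdu : DownUp π) {t u : Fin n}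
    (h : π (peakIdx t) < π (valleyIdx u)) :
    prefixMax (valleyPattern π) t < valleyPattern π u := by
  obtain ⟨j, hjt, hj⟩ := exists_eq_prefixMax (valleyPattern π) t
  rw [← hj, valleyPattern_lt_iff]
  calc π (valleyIdx j) < π (peakIdx j) := (downUp_iff.mp hdu).1 j
    _ ≤ π (peakIdx t) := (peakIdx_strictMono hπ hdu).monotone hjt
    _ < π (valleyIdx u) := h

theorem downUpOf_valleyPattern (hπ : Avoids312 π) (hdu : DownUp π) :
    downUpOf (valleyPattern π) = π := by
  refine (Perm.eq_of_lt_imp_lt fun p q h => rankPerm_lt_rankPerm_of_lt ?_).symm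
  rcases peakIdx_or_valleyIdx p with ⟨t, rfl⟩ | ⟨t, rfl⟩ <;>
    rcases peakIdx_or_valleyIdx q with ⟨u, rfl⟩ | ⟨u, rfl⟩
  · exact (downUpKey_peakIdx_lt_peakIdx _).mpr ((peakIdx_strictMono hπ hdu).lt_iff_lt.mp h)
  · exact (downUpKey_peakIdx_lt_valleyIdx _).mpr (prefixMax_lt_valleyPattern hπ hdu h)
  · exact (downUpKey_valleyIdx_lt_peakIdx _).mpr (valleyPattern_le_prefixMax hπ h)
  · exact (downUpKey_valleyIdx_lt_valleyIdx _).mpr (valleyPattern_lt_iff.mpr h)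

end Backward

noncomputable def downUpAvoids312Equiv (n : ℕ) :
    {σ : Perm (Fin n) // Avoids312 σ} ≃
      {π : Perm (Fin (2 * n)) // Avoids312 π ∧ DownUp π} where
  toFun σ := ⟨downUpOf σ, avoids312_downUpOf σ.2, downUp_downUpOf⟩
  invFun π := ⟨valleyPattern π, avoids312_valleyPattern π.2.1⟩
  left_inv σ := Subtype.ext (valleyPattern_downUpOf σ.1)
  right_inv π := Subtype.ext (downUpOf_valleyPattern π.2.1 π.2.2)

theorem card_downUp_avoids312_eq_card_avoids312_general (n : ℕ) :
    Nat.card {π : Equiv.Perm (Fin (2 * n)) // Avoids312 π ∧ DownUp π} =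
      Nat.card {π : Equiv.Perm (Fin n) // Avoids312 π} :=
  (Nat.card_congr (downUpAvoids312Equiv n)).symm

/-- **Corollary (Lewis).** For every `n ≥ 1`, the number of alternating (down-up)
312-avoiding permutations of `{1,…,2n}` equals the number of 312-avoiding
permutations of `{1,…,n}`. -/
theorem card_downUp_avoids312_eq_card_avoids312 (n : ℕ) (hn : 1 ≤ n) :
    Nat.card {π : Equiv.Perm (Fin (2 * n)) // Avoids312 π ∧ DownUp π} =
      Nat.card {π : Equiv.Perm (Fin n) // Avoids312 π} :=
  card_downUp_avoids312_eq_card_avoids312_general n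
end

section
/- Every triangulation of a convex n-gon with n ≥ 4 has at least two ears; that is, for every set T of n−3 pairwise noncrossing diagonals of the n-gon, there exist at least two distinct vertices v such that the pair consisting of the two cyclic neighbors of v is a diagonal belonging to T. -/
/-- The unordered pair (written with smaller entry first) of the two cyclic neighbors
of the vertex `v` of the `n`-gon: the neighbors of `1` are `2` and `n`, the neighbors
of `n` are `n - 1` and `1`, and the neighbors of any other `v` are `v - 1` and `v + 1`. -/
def neighborPair (n v : ℕ) : ℕ × ℕ :=
  if v = 1 then (2, n) else if v = n then (1, n - 1) else (v - 1, v + 1)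

/-- A vertex `v ∈ {1,…,n}` is an ear of the triangulation `T` if the pair of its two
cyclic neighbors is a diagonal belonging to `T`. -/
def IsEar (n : ℕ) (T : Finset (ℕ × ℕ)) (v : ℕ) : Prop :=
  1 ≤ v ∧ v ≤ n ∧ neighborPair n v ∈ T

/-- Transfer a set of mutually-noncrossing diagonals along a strictly monotone vertex map. -/
lemma image_props (m' : ℕ) (S : Finset (ℕ × ℕ)) (f : ℕ → ℕ) (P : ℕ → Prop)
    (hP : ∀ p ∈ S, P p.1 ∧ P p.2)
    (hmono : ∀ u v, P u → P v → (u < v ↔ f u < f v))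
    (hdiag : ∀ p ∈ S, IsDiagonal m' (f p.1, f p.2))
    (hnc : ∀ p ∈ S, ∀ q ∈ S, p ≠ q → ¬ Crosses p q) :
    (S.image (fun p => (f p.1, f p.2))).card = S.card ∧
      (∀ p ∈ S.image (fun p => (f p.1, f p.2)), IsDiagonal m' p) ∧
      (∀ p ∈ S.image (fun p => (f p.1, f p.2)), ∀ q ∈ S.image (fun p => (f p.1, f p.2)),
        p ≠ q → ¬ Crosses p q) := by
  have heq : ∀ u v, P u → P v → f u = f v → u = v := by
    intro u v hu hv h
    rcases lt_trichotomy u v with h1 | h1 | h1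
    · exact absurd h ((hmono u v hu hv).mp h1).ne
    · exact h1
    · exact absurd h.symm ((hmono v u hv hu).mp h1).ne
  refine ⟨?_, ?_, ?_⟩
  · apply Finset.card_image_of_injOn
    intro p hp q hq h
    obtain ⟨hp1, hp2⟩ := hP p hp
    obtain ⟨hq1, hq2⟩ := hP q hq
    exact Prod.ext (heq _ _ hp1 hq1 (congrArg Prod.fst h)) (heq _ _ hp2 hq2 (congrArg Prod.snd h))
  · intro p hp
    obtain ⟨q, hq, rfl⟩ := Finset.mem_image.mp hp
    exact hdiag q hq
  · intro p' hp' q' hq' hne hcr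
    obtain ⟨p, hp, rfl⟩ := Finset.mem_image.mp hp'
    obtain ⟨q, hq, rfl⟩ := Finset.mem_image.mp hq'
    have hpq : p ≠ q := fun h => hne (by rw [h])
    obtain ⟨hp1, hp2⟩ := hP p hp
    obtain ⟨hq1, hq2⟩ := hP q hq
    apply hnc p hp q hq hpq
    rcases hcr with ⟨h1, h2, h3⟩ | ⟨h1, h2, h3⟩
    · exact Or.inl ⟨(hmono _ _ hp1 hq1).mpr h1, (hmono _ _ hq1 hp2).mpr h2,
        (hmono _ _ hp2 hq2).mpr h3⟩
    · exact Or.inr ⟨(hmono _ _ hq1 hp1).mpr h1, (hmono _ _ hp1 hq2).mpr h2,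
        (hmono _ _ hq2 hp2).mpr h3⟩

/-- Bound on the number of noncrossing diagonals living "outside" a diagonal `(a,b)`. -/
lemma outer_bound (m a b : ℕ) (S : Finset (ℕ × ℕ)) (ha : 1 ≤ a) (hab : a + 2 ≤ b) (hb : b ≤ m)
    (hdiag : ∀ p ∈ S, IsDiagonal m p)
    (hnc : ∀ p ∈ S, ∀ q ∈ S, p ≠ q → ¬ Crosses p q)
    (hout : ∀ q ∈ S, q ≠ (a, b) ∧ ¬ Crosses (a, b) q ∧ ¬(a ≤ q.1 ∧ q.2 ≤ b))
    (hbound : ∀ S' : Finset (ℕ × ℕ), (∀ p ∈ S', IsDiagonal (m + 1 + a - b) p) →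
      (∀ p ∈ S', ∀ q ∈ S', p ≠ q → ¬ Crosses p q) → S'.card ≤ (m + 1 + a - b) - 3) :
    S.card ≤ (m + 1 + a - b) - 3 := by
  have key : ∀ q ∈ S, (q.1 ≤ a ∨ b ≤ q.1) ∧ (q.2 ≤ a ∨ b ≤ q.2) := by
    intro q hq
    obtain ⟨h1, h2, h3, _⟩ := hdiag q hq
    obtain ⟨hne, hcr, hin⟩ := hout q hq
    have hcr' : ¬((a < q.1 ∧ q.1 < b ∧ b < q.2) ∨ (q.1 < a ∧ a < q.2 ∧ q.2 < b)) := hcr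
    omega
  have hP : ∀ p ∈ S, (p.1 ≤ a ∨ b ≤ p.1) ∧ (p.2 ≤ a ∨ b ≤ p.2) := key
  obtain ⟨hc, hd, hn⟩ := image_props (m + 1 + a - b) S
      (fun v => if v ≤ a then v else v + 1 + a - b) (fun v => v ≤ a ∨ b ≤ v)
      hP
      (by intro u v hu hv; split_ifs <;> omega)
      (by
        intro q hq
        obtain ⟨h1, h2, h3, h4⟩ := hdiag q hq
        obtain ⟨hne, hcr, hin⟩ := hout q hq
        obtain ⟨hq1, hq2⟩ := key q hq
        have hne' : q.1 ≠ a ∨ q.2 ≠ b := by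
          by_contra h; push_neg at h; exact hne (Prod.ext h.1 h.2)
        refine ⟨?_, ?_, ?_, ?_⟩ <;> dsimp only <;> split_ifs <;> omega)
      hnc
  calc S.card = (S.image _).card := hc.symm
    _ ≤ (m + 1 + a - b) - 3 := hbound _ hd hn

/-- Any pairwise noncrossing set of diagonals of the `m`-gon has at most `m-3` elements. -/
lemma noncross_card_bound : ∀ m : ℕ, ∀ S : Finset (ℕ × ℕ),
    (∀ p ∈ S, IsDiagonal m p) → (∀ p ∈ S, ∀ q ∈ S, p ≠ q → ¬ Crosses p q) →
    S.card ≤ m - 3 := by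
  intro m
  induction m using Nat.strong_induction_on with
  | _ m IH =>
  intro S hdiag hnc
  rcases S.eq_empty_or_nonempty with rfl | ⟨p, hp⟩
  · simp
  obtain ⟨a, b⟩ := p
  obtain ⟨ha1, hab, hbm, hfull⟩ := hdiag _ hp
  simp only at ha1 hab hbm hfull
  have hm4 : 4 ≤ m := by omega
  classical
  set S₀ := S.erase (a, b) with hS₀
  set I := S₀.filter (fun q => a ≤ q.1 ∧ q.2 ≤ b) with hI
  set O := S₀.filter (fun q => ¬(a ≤ q.1 ∧ q.2 ≤ b)) with hO
  have hsplit : I.card + O.card = S₀.card := Finset.card_filter_add_card_filter_not _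
  have hS₀c : S₀.card = S.card - 1 := Finset.card_erase_of_mem hp
  have hpos : 1 ≤ S.card := Finset.card_pos.mpr ⟨_, hp⟩
  have hImem : ∀ q ∈ I, q ∈ S ∧ q ≠ (a, b) ∧ a ≤ q.1 ∧ q.2 ≤ b := by
    intro q hq
    simp only [hI, hS₀, Finset.mem_filter, Finset.mem_erase] at hq
    exact ⟨hq.1.2, hq.1.1, hq.2⟩
  have hOmem : ∀ q ∈ O, q ∈ S ∧ q ≠ (a, b) ∧ ¬(a ≤ q.1 ∧ q.2 ≤ b) := by
    intro q hq
    simp only [hO, hS₀, Finset.mem_filter, Finset.mem_erase] at hq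
    exact ⟨hq.1.2, hq.1.1, hq.2⟩
  -- inner bound
  have hIb : I.card ≤ (b - a + 1) - 3 := by
    obtain ⟨hc, hd, hn⟩ := image_props (b - a + 1) I (fun v => v + 1 - a)
        (fun v => a ≤ v ∧ v ≤ b)
        (by
          intro q hq
          obtain ⟨hqS, hne, h1, h2⟩ := hImem q hq
          obtain ⟨g1, g2, g3, g4⟩ := hdiag q hqS
          exact ⟨⟨h1, by omega⟩, ⟨by omega, h2⟩⟩)
        (by intro u v hu hv; omega)
        (by
          intro q hq
          obtain ⟨hqS, hne, h1, h2⟩ := hImem q hq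
          obtain ⟨g1, g2, g3, g4⟩ := hdiag q hqS
          have hne' : q.1 ≠ a ∨ q.2 ≠ b := by
            by_contra h; push_neg at h; exact hne (Prod.ext h.1 h.2)
          refine ⟨?_, ?_, ?_, ?_⟩ <;> dsimp only <;> omega)
        (by intro p hp' q hq' h; exact hnc p (hImem p hp').1 q (hImem q hq').1 h)
    calc I.card = (I.image _).card := hc.symm
      _ ≤ (b - a + 1) - 3 := IH (b - a + 1) (by omega) _ hd hn
  -- outer bound
  have hOb : O.card ≤ (m + 1 + a - b) - 3 := by
    apply outer_bound m a b O ha1 hab hbm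
    · intro q hq; exact hdiag q (hOmem q hq).1
    · intro p hp' q hq' h; exact hnc p (hOmem p hp').1 q (hOmem q hq').1 h
    · intro q hq
      obtain ⟨hqS, hne, hq2⟩ := hOmem q hq
      exact ⟨hne, hnc (a, b) hp q hqS (Ne.symm hne), hq2⟩
    · exact IH (m + 1 + a - b) (by omega)
  omega

/-- Every triangulation of an `n`-gon with `n ≥ 5` contains a diagonal `(a, a+2)`. -/
lemma exists_short_diag (n : ℕ) (hn : 5 ≤ n) (T : Finset (ℕ × ℕ))
    (hT : IsTriangulation n T) : ∃ a, 1 ≤ a ∧ a + 2 ≤ n ∧ (a, a + 2) ∈ T := by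
  obtain ⟨hcard, hdiag, hnc⟩ := hT
  have hne : T.Nonempty := by rw [← Finset.card_pos, hcard]; omega
  obtain ⟨p, hp, hmin⟩ := T.exists_min_image (fun q => q.2 - q.1) hne
  obtain ⟨a, b⟩ := p
  obtain ⟨ha1, hab, hbn, hfull⟩ := hdiag _ hp
  simp only at ha1 hab hbn hfull hmin
  by_cases hb : b = a + 2
  · exact ⟨a, ha1, by omega, by rw [← hb]; exact hp⟩
  exfalso
  have hb3 : a + 3 ≤ b := by omega
  classical
  set S₀ := T.erase (a, b) with hS₀
  set I := S₀.filter (fun q => a ≤ q.1 ∧ q.2 ≤ b) with hI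
  set O := S₀.filter (fun q => ¬(a ≤ q.1 ∧ q.2 ≤ b)) with hO
  have hsplit : I.card + O.card = S₀.card := Finset.card_filter_add_card_filter_not _
  have hS₀c : S₀.card = T.card - 1 := Finset.card_erase_of_mem hp
  have hIempty : I = ∅ := by
    rw [Finset.eq_empty_iff_forall_notMem]
    intro q hq
    simp only [hI, hS₀, Finset.mem_filter, Finset.mem_erase] at hq
    obtain ⟨⟨hqne, hqT⟩, h1, h2⟩ := hq
    obtain ⟨g1, g2, g3, g4⟩ := hdiag q hqT
    have := hmin q hqT
    have hne' : q.1 ≠ a ∨ q.2 ≠ b := by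
      by_contra h; push_neg at h; exact hqne (Prod.ext h.1 h.2)
    omega
  have hOc : O.card = n - 4 := by
    rw [hIempty] at hsplit; simp at hsplit; omega
  have hOmem : ∀ q ∈ O, q ∈ T ∧ q ≠ (a, b) ∧ ¬(a ≤ q.1 ∧ q.2 ≤ b) := by
    intro q hq
    simp only [hO, hS₀, Finset.mem_filter, Finset.mem_erase] at hq
    exact ⟨hq.1.2, hq.1.1, hq.2⟩
  have hOb : O.card ≤ (n + 1 + a - b) - 3 := by
    apply outer_bound n a b O ha1 hab hbn
    · intro q hq; exact hdiag q (hOmem q hq).1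
    · intro p hp' q hq' h; exact hnc p (hOmem p hp').1 q (hOmem q hq').1 h
    · intro q hq
      obtain ⟨hqT, hne2, hq2⟩ := hOmem q hq
      exact ⟨hne2, hnc (a, b) hp q hqT (Ne.symm hne2), hq2⟩
    · exact fun S' => noncross_card_bound (n + 1 + a - b) S'
  omega

def shrinkV (a v : ℕ) : ℕ := if v ≤ a then v else v - 1

lemma shrinkV_lt {a u v : ℕ} (hu : u ≠ a + 1) (hv : v ≠ a + 1) :
    u < v ↔ shrinkV a u < shrinkV a v := by
  unfold shrinkV; split_ifs <;> omega

lemma shrinkV_cases {a c x : ℕ} (hc : c ≠ a + 1) (h : shrinkV a c = x) :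
    (c ≤ a ∧ c = x) ∨ (a + 2 ≤ c ∧ c = x + 1) := by
  unfold shrinkV at h; split_ifs at h <;> omega

lemma np_one (n : ℕ) : neighborPair n 1 = (2, n) := by
  rw [neighborPair, if_pos rfl]

lemma np_last {n : ℕ} (h : n ≠ 1) : neighborPair n n = (1, n - 1) := by
  rw [neighborPair, if_neg h, if_pos rfl]

lemma np_mid {n v : ℕ} (h1 : v ≠ 1) (h2 : v ≠ n) : neighborPair n v = (v - 1, v + 1) := by
  rw [neighborPair, if_neg h1, if_neg h2]

lemma two_ears_aux : ∀ n : ℕ, 4 ≤ n → ∀ T : Finset (ℕ × ℕ), IsTriangulation n T →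
    ∃ v w : ℕ, v ≠ w ∧ IsEar n T v ∧ IsEar n T w := by
  intro n
  induction n using Nat.strong_induction_on with
  | _ n IH =>
  intro hn T hT
  rcases eq_or_lt_of_le hn with h4 | h5
  · -- base case n = 4
    have hn4 : n = 4 := h4.symm
    subst hn4
    obtain ⟨hcard, hdiag, hnc⟩ := hT
    obtain ⟨p, hp⟩ := Finset.card_eq_one.mp (by rw [hcard])
    obtain ⟨a, b⟩ := p
    have hpT : (a, b) ∈ T := by rw [hp]; exact Finset.mem_singleton_self _
    obtain ⟨g1, g2, g3, g4⟩ := hdiag _ hpT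
    simp only at g1 g2 g3 g4
    have hcases : (a = 1 ∧ b = 3) ∨ (a = 2 ∧ b = 4) := by omega
    rcases hcases with ⟨rfl, rfl⟩ | ⟨rfl, rfl⟩
    · refine ⟨2, 4, by omega, ⟨by omega, by omega, ?_⟩, ⟨by omega, by omega, ?_⟩⟩
      · rw [np_mid (by omega) (by omega)]; exact hpT
      · rw [np_last (by omega)]; exact hpT
    · refine ⟨1, 3, by omega, ⟨by omega, by omega, ?_⟩, ⟨by omega, by omega, ?_⟩⟩
      · rw [np_one]; exact hpT
      · rw [np_mid (by omega) (by omega)]; exact hpT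
  · -- inductive step, n ≥ 5
    have hn5 : 5 ≤ n := h5
    obtain ⟨a, ha1, ha2, haT⟩ := exists_short_diag n hn5 T hT
    obtain ⟨hcard, hdiag, hnc⟩ := hT
    -- no other diagonal of T uses the vertex a+1
    have havoid : ∀ q ∈ T, q ≠ (a, a + 2) → q.1 ≠ a + 1 ∧ q.2 ≠ a + 1 := by
      intro q hq hne
      have h1 : ¬ Crosses (a, a + 2) q := hnc _ haT q hq (Ne.symm hne)
      have h1' : ¬((a < q.1 ∧ q.1 < a + 2 ∧ a + 2 < q.2) ∨
          (q.1 < a ∧ a < q.2 ∧ q.2 < a + 2)) := h1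
      obtain ⟨d1, d2, d3, d4⟩ := hdiag q hq
      omega
    classical
    set S₀ := T.erase (a, a + 2) with hS₀def
    have hS₀mem : ∀ q ∈ S₀, q ∈ T ∧ q ≠ (a, a + 2) := by
      intro q hq
      rw [hS₀def, Finset.mem_erase] at hq
      exact ⟨hq.2, hq.1⟩
    have hS₀c : S₀.card = n - 4 := by
      rw [hS₀def, Finset.card_erase_of_mem haT, hcard]; omega
    -- build the collapsed triangulation of the (n-1)-gon
    obtain ⟨hc, hd, hnc'⟩ := image_props (n - 1) S₀ (shrinkV a) (fun v => v ≠ a + 1)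
        (by intro q hq; exact havoid q (hS₀mem q hq).1 (hS₀mem q hq).2)
        (by intro u v hu hv; exact shrinkV_lt hu hv)
        (by
          intro q hq
          obtain ⟨hqT, hqne⟩ := hS₀mem q hq
          obtain ⟨hq1, hq2⟩ := havoid q hqT hqne
          obtain ⟨d1, d2, d3, d4⟩ := hdiag q hqT
          have hne' : q.1 ≠ a ∨ q.2 ≠ a + 2 := by
            by_contra h; push_neg at h; exact hqne (Prod.ext h.1 h.2)
          refine ⟨?_, ?_, ?_, ?_⟩ <;> simp only [shrinkV] <;> split_ifs <;> omega)
        (by intro p hp q hq h; exact hnc p (hS₀mem p hp).1 q (hS₀mem q hq).1 h)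
    set T' := S₀.image (fun q => (shrinkV a q.1, shrinkV a q.2)) with hT'def
    have hT' : IsTriangulation (n - 1) T' := by
      refine ⟨?_, hd, hnc'⟩
      rw [hc, hS₀c]; omega
    obtain ⟨v', w', hvw, hev, hew⟩ := IH (n - 1) (by omega) (by omega) T' hT'
    -- the vertices a and a+1 of the (n-1)-gon cannot both be ears of T'
    have hnotboth : ¬(IsEar (n - 1) T' a ∧ IsEar (n - 1) T' (a + 1)) := by
      rintro ⟨⟨_, haub, hamem⟩, ⟨_, ha1ub, ha1mem⟩⟩
      rcases Nat.lt_or_ge a 2 with halt | hage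
      · -- a = 1
        have ha : a = 1 := by omega
        subst ha
        rw [np_one] at hamem
        rw [np_mid (by omega) (by omega)] at ha1mem
        have : ¬ Crosses (2 - 1, 2 + 1) (2, n - 1) :=
          hnc' _ ha1mem _ hamem (by
            intro h
            have := congrArg Prod.snd h
            simp only at this
            omega)
        exact this (Or.inl ⟨by omega, by omega, by omega⟩)
      · rcases Nat.lt_or_ge a (n - 2) with halt2 | hage2
        · -- 2 ≤ a ≤ n - 3 : generic case
          rw [np_mid (by omega) (by omega)] at hamem
          rw [np_mid (by omega) (by omega)] at ha1mem
          have : ¬ Crosses (a - 1, a + 1) (a + 1 - 1, a + 1 + 1) :=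
            hnc' _ hamem _ ha1mem (by
              intro h
              have := congrArg Prod.fst h
              simp only at this
              omega)
          exact this (Or.inl ⟨by omega, by omega, by omega⟩)
        · -- a = n - 2
          have ha : a = n - 2 := by omega
          have h1 : a + 1 = n - 1 := by omega
          rw [h1, np_last (by omega)] at ha1mem
          rw [np_mid (by omega) (by omega)] at hamem
          have : ¬ Crosses (1, n - 2) (a - 1, a + 1) :=
            hnc' _ ha1mem _ hamem (by
              intro h
              have := congrArg Prod.fst h
              simp only at this
              omega)
          exact this (Or.inl ⟨by omega, by omega, by omega⟩)
    -- pick an ear of T' away from {a, a+1}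
    have hpick : ∃ u', IsEar (n - 1) T' u' ∧ u' ≠ a ∧ u' ≠ a + 1 := by
      by_cases hva : v' ≠ a ∧ v' ≠ a + 1
      · exact ⟨v', hev, hva.1, hva.2⟩
      · push_neg at hva
        by_cases hwa : w' ≠ a ∧ w' ≠ a + 1
        · exact ⟨w', hew, hwa.1, hwa.2⟩
        · exfalso
          push_neg at hwa
          apply hnotboth
          have hva' : v' = a ∨ v' = a + 1 := by
            rcases Classical.em (v' = a) with h | h
            · exact Or.inl h
            · exact Or.inr (hva h)
          have hwa' : w' = a ∨ w' = a + 1 := by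
            rcases Classical.em (w' = a) with h | h
            · exact Or.inl h
            · exact Or.inr (hwa h)
          constructor
          · rcases hva' with h | h
            · exact h ▸ hev
            · rcases hwa' with h2 | h2
              · exact h2 ▸ hew
              · exact absurd (h.trans h2.symm) hvw
          · rcases hva' with h | h
            · rcases hwa' with h2 | h2
              · exact absurd (h.trans h2.symm) hvw
              · exact h2 ▸ hew
            · exact h ▸ hev
    obtain ⟨u', ⟨hu1, hu2, hu3⟩, hua, hua1⟩ := hpick
    -- pull the ear back to T
    rw [hT'def] at hu3
    obtain ⟨q, hq, hfq⟩ := Finset.mem_image.mp hu3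
    obtain ⟨c, d⟩ := q
    obtain ⟨hqT, hqne⟩ := hS₀mem _ hq
    obtain ⟨hc1, hd1⟩ := havoid _ hqT hqne
    simp only at hc1 hd1
    obtain ⟨dd1, dd2, dd3, dd4⟩ := hdiag _ hqT
    simp only at dd1 dd2 dd3 dd4
    have earA : IsEar n T (a + 1) := by
      refine ⟨by omega, by omega, ?_⟩
      rw [np_mid (by omega) (by omega)]
      have : (a + 1 - 1, a + 1 + 1) = (a, a + 2) := by
        rw [Prod.mk.injEq]; omega
      rw [this]; exact haT
    have hear : ∃ u, u ≠ a + 1 ∧ IsEar n T u := by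
      rcases Classical.em (u' = 1) with rfl | hu'1
      · -- u' = 1, so a ≥ 2, ear at 1
        rw [np_one] at hfq
        simp only [Prod.mk.injEq] at hfq
        obtain ⟨e1, e2⟩ := hfq
        have hc2 := shrinkV_cases hc1 e1
        have hd2 := shrinkV_cases hd1 e2
        refine ⟨1, by omega, by omega, by omega, ?_⟩
        rw [np_one]
        have : (2, n) = (c, d) := by rw [Prod.mk.injEq]; omega
        rw [this]; exact hqT
      · rcases Classical.em (u' = n - 1) with rfl | hu'n
        · -- u' = n - 1, ear at n
          rw [np_last (by omega)] at hfq
          simp only [Prod.mk.injEq] at hfq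
          obtain ⟨e1, e2⟩ := hfq
          have hc2 := shrinkV_cases hc1 e1
          have hd2 := shrinkV_cases hd1 e2
          refine ⟨n, by omega, by omega, by omega, ?_⟩
          rw [np_last (by omega)]
          have : (1, n - 1) = (c, d) := by rw [Prod.mk.injEq]; omega
          rw [this]; exact hqT
        · rw [np_mid hu'1 hu'n] at hfq
          simp only [Prod.mk.injEq] at hfq
          obtain ⟨e1, e2⟩ := hfq
          have hc2 := shrinkV_cases hc1 e1
          have hd2 := shrinkV_cases hd1 e2
          rcases Nat.lt_or_ge u' a with hlt | hge
          · -- u' < a : ear at u'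
            refine ⟨u', by omega, by omega, by omega, ?_⟩
            rw [np_mid hu'1 (by omega)]
            have : (u' - 1, u' + 1) = (c, d) := by rw [Prod.mk.injEq]; omega
            rw [this]; exact hqT
          · -- u' ≥ a + 2 : ear at u' + 1
            have hge2 : a + 2 ≤ u' := by omega
            refine ⟨u' + 1, by omega, by omega, by omega, ?_⟩
            rw [np_mid (by omega) (by omega)]
            have : (u' + 1 - 1, u' + 1 + 1) = (c, d) := by rw [Prod.mk.injEq]; omega
            rw [this]; exact hqT
    obtain ⟨u, hune, hearu⟩ := hear
    exact ⟨a + 1, u, Ne.symm hune, earA, hearu⟩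


/-- **Lemma.** Every triangulation of a convex `n`-gon with `n ≥ 4` has at least two
ears. -/
theorem two_ears (n : ℕ) (hn : 4 ≤ n) (T : Finset (ℕ × ℕ)) (hT : IsTriangulation n T) :
    ∃ v w : ℕ, v ≠ w ∧ IsEar n T v ∧ IsEar n T w := by
  exact two_ears_aux n hn T hT
end
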